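/- arXiv:2212.00456 — 5 statements merged into one kernel-verified Lean document; each statement's English description precedes it below -/
import Mathlib

section
/- Let γ : (0,∞) → [0,∞) satisfy γ(r) ≤ C(r⁻¹ + r⁻²), γ'(r) ≤ 0, and r|γ'(r)| ≤ Cγ(r) for all r > 0. Then for all ξ, η ∈ ℝⁿ \ {0}, |γ(|ξ|)^{1/2} − γ(|η|)^{1/2}| ≤ C' · (|ξ−η|/|η|) · (|ξ|^{−1/2} + |ξ|^{−1}) for a constant C' depending only on C. -/
lemma aux_sqrt_add {x y : ℝ} (hx : 0 ≤ x) (hy : 0 ≤ y) :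
    Real.sqrt (x + y) ≤ Real.sqrt x + Real.sqrt y := by
  have h : Real.sqrt x + Real.sqrt y = Real.sqrt ((Real.sqrt x + Real.sqrt y) ^ 2) :=
    (Real.sqrt_sq (by positivity)).symm
  rw [h]
  apply Real.sqrt_le_sqrt
  nlinarith [Real.sq_sqrt hx, Real.sq_sqrt hy, Real.sqrt_nonneg x, Real.sqrt_nonneg y]

lemma aux_sqrt_le_self {x : ℝ} (hx : 1 ≤ x) : Real.sqrt x ≤ x := by
  have h0 : (0:ℝ) ≤ x := by linarith
  have hsq : Real.sqrt x * Real.sqrt x = x := Real.mul_self_sqrt h0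
  have hs1 : 1 ≤ Real.sqrt x := by nlinarith [Real.sqrt_nonneg x]
  nlinarith [Real.sqrt_nonneg x]

lemma aux_sqrt_sub {x y : ℝ} (hy : 0 ≤ y) (hxy : y ≤ x) (hx : 0 < x) :
    Real.sqrt x - Real.sqrt y ≤ (x - y) / Real.sqrt x := by
  have hsx : 0 < Real.sqrt x := Real.sqrt_pos.2 hx
  rw [le_div_iff₀ hsx]
  have h1 : Real.sqrt x * Real.sqrt x = x := Real.mul_self_sqrt hx.le
  have h2 : Real.sqrt y * Real.sqrt y = y := Real.mul_self_sqrt hy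
  have h3 : Real.sqrt y ≤ Real.sqrt x := Real.sqrt_le_sqrt hxy
  nlinarith [Real.sqrt_nonneg y]

lemma aux_pow (N : ℕ) : ∀ t : ℝ, 1 ≤ t → t ≤ 2 → t ^ N - 1 ≤ (N : ℝ) * 2 ^ N * (t - 1) := by
  induction N with
  | zero => intro t h1 h2; simp
  | succ N ih =>
    intro t h1 h2
    have hN := ih t h1 h2
    have htN : t ^ N ≤ 2 ^ N := pow_le_pow_left₀ (by linarith) h2 N
    have htN0 : (1:ℝ) ≤ t ^ N := one_le_pow₀ h1
    have h2N : (1:ℝ) ≤ 2 ^ N := one_le_pow₀ (by norm_num)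
    have e : t ^ (N + 1) - 1 = t ^ N * (t - 1) + (t ^ N - 1) := by rw [pow_succ]; ring
    have h4 : t ^ N * (t - 1) ≤ 2 ^ N * (t - 1) :=
      mul_le_mul_of_nonneg_right htN (by linarith)
    have h5 : ((N : ℝ) + 1) * 2 ^ (N + 1) * (t - 1)
        = 2 * (((N : ℝ) + 1) * 2 ^ N * (t - 1)) := by rw [pow_succ]; ring
    have h6 : (0:ℝ) ≤ ((N : ℝ) + 1) * 2 ^ N * (t - 1) := by
      apply mul_nonneg (mul_nonneg (by positivity) (by positivity)); linarith
    push_cast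
    nlinarith

/-- key estimate on a comparable pair -/
lemma aux_case2 (γ : ℝ → ℝ) (N : ℕ)
    (hpos : ∀ r > 0, 0 ≤ γ r)
    (hanti : AntitoneOn γ (Set.Ioi 0))
    (hmono : MonotoneOn (fun r => γ r * r ^ N) (Set.Ioi 0))
    {m M : ℝ} (hm : 0 < m) (hmM : m ≤ M) (hM2 : M ≤ 2 * m) :
    Real.sqrt (γ m) - Real.sqrt (γ M) ≤
      Real.sqrt (γ m) * ((N : ℝ) * 2 ^ N) * ((M - m) / m) := by
  have hMpos : 0 < M := lt_of_lt_of_le hm hmM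
  have hγM : 0 ≤ γ M := hpos M hMpos
  have hγm : 0 ≤ γ m := hpos m hm
  have hMm : γ M ≤ γ m := hanti (Set.mem_Ioi.2 hm) (Set.mem_Ioi.2 hMpos) hmM
  by_cases hz : γ m = 0
  · have : γ M = 0 := le_antisymm (hz ▸ hMm) hγM
    rw [hz, this]
    have : (0:ℝ) ≤ Real.sqrt 0 * ((N : ℝ) * 2 ^ N) * ((M - m) / m) := by
      apply mul_nonneg (mul_nonneg (Real.sqrt_nonneg _) (by positivity))
      apply div_nonneg (by linarith) hm.le
    linarith
  · have hγm' : 0 < γ m := lt_of_le_of_ne hγm (Ne.symm hz)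
    set t : ℝ := M / m with ht
    have ht1 : 1 ≤ t := (one_le_div hm).2 hmM
    have ht2 : t ≤ 2 := (div_le_iff₀ hm).2 (by linarith)
    have hg : γ m * m ^ N ≤ γ M * M ^ N :=
      hmono (Set.mem_Ioi.2 hm) (Set.mem_Ioi.2 hMpos) hmM
    have hMtm : M = t * m := by rw [ht, div_mul_cancel₀ M hm.ne']
    have hMN : M ^ N = t ^ N * m ^ N := by rw [hMtm, mul_pow]
    have hmN : (0:ℝ) < m ^ N := pow_pos hm N
    have hkey : γ m ≤ γ M * t ^ N := by
      have h' : γ m * m ^ N ≤ γ M * t ^ N * m ^ N := by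
        rw [hMN, ← mul_assoc] at hg; exact hg
      exact le_of_mul_le_mul_right h' hmN
    have htN1 : (1:ℝ) ≤ t ^ N := one_le_pow₀ ht1
    have hdiff : γ m - γ M ≤ γ m * ((N : ℝ) * 2 ^ N) * (t - 1) := by
      have h1 : γ m - γ M ≤ γ M * (t ^ N - 1) := by nlinarith
      have h2 : γ M * (t ^ N - 1) ≤ γ m * (t ^ N - 1) := by nlinarith
      have h3 := aux_pow N t ht1 ht2
      nlinarith
    have hs := aux_sqrt_sub hγM hMm hγm'
    have hds : (γ m - γ M) / Real.sqrt (γ m) ≤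
        Real.sqrt (γ m) * ((N : ℝ) * 2 ^ N) * (t - 1) := by
      rw [div_le_iff₀ (Real.sqrt_pos.2 hγm')]
      have : Real.sqrt (γ m) * ((N : ℝ) * 2 ^ N) * (t - 1) * Real.sqrt (γ m)
          = γ m * ((N : ℝ) * 2 ^ N) * (t - 1) := by
        rw [show Real.sqrt (γ m) * ((N : ℝ) * 2 ^ N) * (t - 1) * Real.sqrt (γ m)
            = (Real.sqrt (γ m) * Real.sqrt (γ m)) * (((N : ℝ) * 2 ^ N) * (t - 1)) by ring,
          Real.mul_self_sqrt hγm]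
        ring
      rw [this]; exact hdiff
    have htm : t - 1 = (M - m) / m := by rw [ht]; field_simp
    calc Real.sqrt (γ m) - Real.sqrt (γ M) ≤ (γ m - γ M) / Real.sqrt (γ m) := hs
      _ ≤ Real.sqrt (γ m) * ((N : ℝ) * 2 ^ N) * (t - 1) := hds
      _ = Real.sqrt (γ m) * ((N : ℝ) * 2 ^ N) * ((M - m) / m) := by rw [htm]

set_option maxHeartbeats 1000000 in
theorem stmt0 (n : ℕ) (C : ℝ) (hC : 0 < C) :
    ∃ C' > 0, ∀ γ : ℝ → ℝ,
      (∀ r > 0, 0 ≤ γ r) →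
      (∀ r > 0, DifferentiableAt ℝ γ r) →
      (∀ r > 0, γ r ≤ C * (r⁻¹ + (r ^ 2)⁻¹)) →
      (∀ r > 0, deriv γ r ≤ 0) →
      (∀ r > 0, r * |deriv γ r| ≤ C * γ r) →
      ∀ ξ η : EuclideanSpace ℝ (Fin n), ξ ≠ 0 → η ≠ 0 →
        |Real.sqrt (γ ‖ξ‖) - Real.sqrt (γ ‖η‖)| ≤
          C' * (‖ξ - η‖ / ‖η‖) * (‖ξ‖ ^ (-(1/2) : ℝ) + ‖ξ‖⁻¹) := by
  set N : ℕ := ⌈C⌉₊ with hNdef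
  have hCN : C ≤ (N : ℝ) := Nat.le_ceil C
  have hN1 : 1 ≤ N := Nat.one_le_ceil_iff.2 hC
  set S : ℝ := Real.sqrt C with hSdef
  have hS : 0 < S := Real.sqrt_pos.2 hC
  set K : ℝ := (N : ℝ) * 2 ^ N with hKdef
  have hK : 0 < K := by positivity
  refine ⟨(5 + 4 * K) * S, by positivity, ?_⟩
  intro γ hpos hdiff hbound hderiv hmul ξ η hξ hη
  set a : ℝ := ‖ξ‖ with hadef
  set b : ℝ := ‖η‖ with hbdef
  set d : ℝ := ‖ξ - η‖ with hddef
  have ha : 0 < a := norm_pos_iff.2 hξ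
  have hb : 0 < b := norm_pos_iff.2 hη
  have hd0 : 0 ≤ d := norm_nonneg _
  have habd : |a - b| ≤ d := abs_norm_sub_norm_le ξ η
  -- rewrite the rpow
  have hrw : a ^ (-(1/2) : ℝ) = Real.sqrt a⁻¹ := by
    rw [Real.rpow_neg ha.le, ← Real.sqrt_eq_rpow, ← Real.sqrt_inv]
  set A : ℝ := Real.sqrt a⁻¹ + a⁻¹ with hAdef
  have hA : 0 < A := by positivity
  rw [hrw]
  show |Real.sqrt (γ a) - Real.sqrt (γ b)| ≤ (5 + 4 * K) * S * (d / b) * A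
  -- continuity and monotonicity facts
  have hcont : ContinuousOn γ (Set.Ioi 0) := fun x hx =>
    (hdiff x hx).continuousAt.continuousWithinAt
  have hanti : AntitoneOn γ (Set.Ioi 0) := by
    apply antitoneOn_of_deriv_nonpos (convex_Ioi 0) hcont
    · rw [interior_Ioi]; exact fun x hx => (hdiff x hx).differentiableWithinAt
    · rw [interior_Ioi]; exact fun x hx => hderiv x hx
  have hmono : MonotoneOn (fun r => γ r * r ^ N) (Set.Ioi 0) := by
    have hdifg : ∀ x ∈ Set.Ioi (0:ℝ),
        HasDerivAt (fun r => γ r * r ^ N)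
          (deriv γ x * x ^ N + γ x * ((N : ℝ) * x ^ (N - 1))) x := by
      intro x hx
      exact ((hdiff x hx).hasDerivAt).mul (hasDerivAt_pow N x)
    apply monotoneOn_of_deriv_nonneg (convex_Ioi 0)
    · exact ContinuousOn.mul hcont (continuousOn_pow N)
    · rw [interior_Ioi]; exact fun x hx => (hdifg x hx).differentiableAt.differentiableWithinAt
    · rw [interior_Ioi]
      intro x hx
      rw [(hdifg x hx).deriv]
      have hx0 : (0:ℝ) < x := hx
      have hxN : x ^ N = x ^ (N - 1) * x := by
        rw [← pow_succ, Nat.sub_add_cancel hN1]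
      have hγx : 0 ≤ γ x := hpos x hx0
      have hdx : deriv γ x ≤ 0 := hderiv x hx0
      have hmx : x * |deriv γ x| ≤ C * γ x := hmul x hx0
      rw [abs_of_nonpos hdx] at hmx
      have hxn1 : (0:ℝ) < x ^ (N - 1) := pow_pos hx0 _
      have hCNx : C * γ x ≤ (N : ℝ) * γ x := by nlinarith
      -- 0 ≤ deriv γ x * x ^ N + γ x * (N * x ^ (N-1))
      rw [hxN]
      have : -(C * γ x) ≤ x * deriv γ x := by linarith
      nlinarith
  -- bound on sqrt γ at any point
  have hsb : ∀ r : ℝ, 0 < r → Real.sqrt (γ r) ≤ S * (Real.sqrt r⁻¹ + r⁻¹) := by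
    intro r hr
    have h1 : γ r ≤ C * (r⁻¹ + (r ^ 2)⁻¹) := hbound r hr
    have h2 : Real.sqrt (γ r) ≤ Real.sqrt (C * (r⁻¹ + (r ^ 2)⁻¹)) := Real.sqrt_le_sqrt h1
    rw [Real.sqrt_mul hC.le] at h2
    have h3 : Real.sqrt (r⁻¹ + (r ^ 2)⁻¹) ≤ Real.sqrt r⁻¹ + Real.sqrt (r ^ 2)⁻¹ :=
      aux_sqrt_add (by positivity) (by positivity)
    have h4 : Real.sqrt (r ^ 2)⁻¹ = r⁻¹ := by
      rw [← inv_pow, Real.sqrt_sq (by positivity)]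
    rw [h4] at h3
    calc Real.sqrt (γ r) ≤ S * Real.sqrt (r⁻¹ + (r ^ 2)⁻¹) := h2
      _ ≤ S * (Real.sqrt r⁻¹ + r⁻¹) := by nlinarith
  have hsa : Real.sqrt (γ a) ≤ S * A := by rw [hAdef]; exact hsb a ha
  clear_value a b d S A K N
  by_cases hcase : b ≤ 2 * d
  · -- far case: d/b ≥ 1/2
    have hdb : 1 / 2 ≤ d / b := by rw [le_div_iff₀ hb]; linarith
    have hsbb : Real.sqrt (γ b) ≤ S * (1 + d / b) * A := by
      rcases le_total a b with hab | hab
      · have : γ b ≤ γ a := hanti (Set.mem_Ioi.2 ha) (Set.mem_Ioi.2 hb) hab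
        have := Real.sqrt_le_sqrt this
        have h1 : (0:ℝ) ≤ d / b := div_nonneg hd0 hb.le
        have e : S * (1 + d / b) * A = S * A + S * (d / b) * A := by ring
        linarith [mul_nonneg (mul_nonneg hS.le h1) hA.le, Real.sqrt_le_sqrt this]
      · -- b ≤ a : use bound at b, compare b⁻¹ with a⁻¹
        have h1 : Real.sqrt (γ b) ≤ S * (Real.sqrt b⁻¹ + b⁻¹) := hsb b hb
        have hab2 : a ≤ b + d := by
          have : a - b ≤ |a - b| := le_abs_self _
          linarith
        have hq : (0:ℝ) ≤ 1 + d / b := by positivity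
        have hbinv : b⁻¹ ≤ (1 + d / b) * a⁻¹ := by
          have e1 : b⁻¹ = a / (a * b) := by field_simp
          have e2 : (1 + d / b) * a⁻¹ = (b + d) / (a * b) := by
            rw [eq_div_iff (by positivity : (a * b : ℝ) ≠ 0)]
            field_simp
          rw [e1, e2]
          gcongr
        have hbinvs : Real.sqrt b⁻¹ ≤ (1 + d / b) * Real.sqrt a⁻¹ := by
          have h2 : Real.sqrt b⁻¹ ≤ Real.sqrt ((1 + d / b) * a⁻¹) := Real.sqrt_le_sqrt hbinv
          rw [Real.sqrt_mul hq] at h2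
          have hdb1 : (0:ℝ) ≤ d / b := div_nonneg hd0 hb.le
          have h3 : Real.sqrt (1 + d / b) ≤ 1 + d / b :=
            aux_sqrt_le_self (by linarith)
          exact h2.trans (mul_le_mul_of_nonneg_right h3 (Real.sqrt_nonneg _))
        calc Real.sqrt (γ b) ≤ S * (Real.sqrt b⁻¹ + b⁻¹) := h1
          _ ≤ S * ((1 + d / b) * Real.sqrt a⁻¹ + (1 + d / b) * a⁻¹) :=
              mul_le_mul_of_nonneg_left (add_le_add hbinvs hbinv) hS.le
          _ = S * (1 + d / b) * A := by rw [hAdef]; ring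
    have habs : |Real.sqrt (γ a) - Real.sqrt (γ b)| ≤ Real.sqrt (γ a) + Real.sqrt (γ b) := by
      rw [abs_le]
      constructor <;> nlinarith [Real.sqrt_nonneg (γ a), Real.sqrt_nonneg (γ b)]
    have hsum : Real.sqrt (γ a) + Real.sqrt (γ b) ≤ S * (2 + d / b) * A := by
      have e : S * (2 + d / b) * A = S * A + S * (1 + d / b) * A := by ring
      linarith
    have hdb0 : (0:ℝ) ≤ d / b := div_nonneg hd0 hb.le
    have hfin : S * (2 + d / b) * A ≤ (5 + 4 * K) * S * (d / b) * A := by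
      have h25 : 2 + d / b ≤ 5 * (d / b) := by linarith
      have e1 : S * (2 + d / b) * A ≤ S * (5 * (d / b)) * A :=
        mul_le_mul_of_nonneg_right (mul_le_mul_of_nonneg_left h25 hS.le) hA.le
      have hq2 : (0:ℝ) ≤ S * (d / b) * A := mul_nonneg (mul_nonneg hS.le hdb0) hA.le
      have e2 : S * (5 * (d / b)) * A ≤ (5 + 4 * K) * S * (d / b) * A := by
        calc S * (5 * (d / b)) * A = 5 * (S * (d / b) * A) := by ring
          _ ≤ (5 + 4 * K) * (S * (d / b) * A) :=
              mul_le_mul_of_nonneg_right (by linarith) hq2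
          _ = (5 + 4 * K) * S * (d / b) * A := by ring
      linarith
    linarith
  · -- near case
    push_neg at hcase
    set m : ℝ := min a b with hmdef
    set M : ℝ := max a b with hMdef
    have hm : 0 < m := lt_min ha hb
    have hmM : m ≤ M := min_le_max
    have hMm : M - m = |a - b| := by
      rcases le_total a b with h | h
      · rw [hmdef, hMdef, min_eq_left h, max_eq_right h, abs_of_nonpos (by linarith)]; ring
      · rw [hmdef, hMdef, min_eq_right h, max_eq_left h, abs_of_nonneg (by linarith)]
    have hMmd : M - m ≤ d := hMm ▸ habd
    have hmb : b - d ≤ m := by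
      have h1 : b - a ≤ |a - b| := by rw [abs_sub_comm]; exact le_abs_self _
      have h2 : b - d ≤ a := by linarith
      exact le_min h2 (by linarith)
    have hmb2 : b < 2 * m := by linarith
    have hM2 : M ≤ 2 * m := by linarith
    have ham : a ≤ 2 * m := le_trans (le_max_left a b) hM2
    -- sqrt γ m ≤ 2 S A
    have hminv : m⁻¹ ≤ 2 * a⁻¹ := by
      have e1 : m⁻¹ = a / (a * m) := by field_simp
      have e2 : 2 * a⁻¹ = 2 * m / (a * m) := by field_simp
      rw [e1, e2]
      gcongr
    have hminvs : Real.sqrt m⁻¹ ≤ 2 * Real.sqrt a⁻¹ := by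
      have h1 : Real.sqrt m⁻¹ ≤ Real.sqrt (2 * a⁻¹) := Real.sqrt_le_sqrt hminv
      rw [Real.sqrt_mul (by norm_num)] at h1
      have h2 : Real.sqrt 2 ≤ 2 := by
        nlinarith [Real.sq_sqrt (by norm_num : (0:ℝ) ≤ 2), Real.sqrt_nonneg 2]
      nlinarith [Real.sqrt_nonneg a⁻¹, Real.sqrt_nonneg (2:ℝ)]
    have hsm : Real.sqrt (γ m) ≤ 2 * S * A := by
      have h1 := hsb m hm
      calc Real.sqrt (γ m) ≤ S * (Real.sqrt m⁻¹ + m⁻¹) := h1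
        _ ≤ S * (2 * Real.sqrt a⁻¹ + 2 * a⁻¹) := by nlinarith
        _ = 2 * S * A := by rw [hAdef]; ring
    -- ratio bound
    have hrat : (M - m) / m ≤ 2 * (d / b) := by
      rw [div_le_iff₀ hm]
      have hdb' : 2 * (d / b) * m = 2 * d * m / b := by ring
      rw [hdb', le_div_iff₀ hb]
      nlinarith
    have hkey := aux_case2 γ N hpos hanti hmono hm hmM hM2
    have habs : |Real.sqrt (γ a) - Real.sqrt (γ b)| = Real.sqrt (γ m) - Real.sqrt (γ M) := by
      have hγMm : γ M ≤ γ m := hanti (Set.mem_Ioi.2 hm) (Set.mem_Ioi.2 (lt_of_lt_of_le hm hmM)) hmM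
      have hs : Real.sqrt (γ M) ≤ Real.sqrt (γ m) := Real.sqrt_le_sqrt hγMm
      rcases le_total a b with h | h
      · have e1 : m = a := min_eq_left h
        have e2 : M = b := max_eq_right h
        rw [e1, e2] at hs
        rw [← e1, ← e2, abs_of_nonneg (by rw [e1, e2]; linarith)]
      · have e1 : m = b := min_eq_right h
        have e2 : M = a := max_eq_left h
        rw [e1, e2] at hs
        rw [← e1, ← e2] at hs ⊢
        rw [abs_of_nonpos (by linarith)]
        ring
    rw [habs]
    rw [← hKdef] at hkey
    have hchain : Real.sqrt (γ m) * K * ((M - m) / m) ≤ (5 + 4 * K) * S * (d / b) * A := by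
      have h0 : 0 ≤ (M - m) / m := div_nonneg (by linarith) hm.le
      have h1 : Real.sqrt (γ m) * K * ((M - m) / m) ≤ 2 * S * A * K * ((M - m) / m) := by
        have t := mul_le_mul_of_nonneg_right hsm (mul_nonneg hK.le h0)
        calc Real.sqrt (γ m) * K * ((M - m) / m)
            = Real.sqrt (γ m) * (K * ((M - m) / m)) := by ring
          _ ≤ 2 * S * A * (K * ((M - m) / m)) := t
          _ = 2 * S * A * K * ((M - m) / m) := by ring
      have h2 : 2 * S * A * K * ((M - m) / m) ≤ 2 * S * A * K * (2 * (d / b)) :=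
        mul_le_mul_of_nonneg_left hrat
          (by positivity)
      have hdb0 : 0 ≤ d / b := div_nonneg hd0 hb.le
      have hq2 : (0:ℝ) ≤ S * (d / b) * A := mul_nonneg (mul_nonneg hS.le hdb0) hA.le
      have h3 : 2 * S * A * K * (2 * (d / b)) ≤ (5 + 4 * K) * S * (d / b) * A := by
        calc 2 * S * A * K * (2 * (d / b)) = 4 * K * (S * (d / b) * A) := by ring
          _ ≤ (5 + 4 * K) * (S * (d / b) * A) :=
              mul_le_mul_of_nonneg_right (by linarith) hq2
          _ = (5 + 4 * K) * S * (d / b) * A := by ring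
      linarith
    calc Real.sqrt (γ m) - Real.sqrt (γ M)
        ≤ Real.sqrt (γ m) * K * ((M - m) / m) := hkey
      _ ≤ (5 + 4 * K) * S * (d / b) * A := hchain
end

section
/- Let s ≥ 1 and let f, g ∈ H^s(ℝⁿ) with f̂, ĝ also in the weighted L¹ space Y¹. Then the commutator H := [Λ^s, f·∇]g = Λ^s(f·∇g) − f·∇(Λ^s g) satisfies ‖H‖_{L²} ≤ C (‖f‖_{Y¹} ‖g‖_{H^s} + ‖g‖_{Y¹} ‖f‖_{H^s}), where ‖h‖_{Y¹} = ∫(1+|ξ|)|ĥ(ξ)|dξ and Λ = (−Δ)^{1/2}. -/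
open MeasureTheory ENNReal

lemma two_rpow_aux {t x y : ℝ} (ht : 0 ≤ t) (hx : 0 ≤ x) (hy : 0 ≤ y) :
    (x + y) ^ t ≤ 2 ^ t * (x ^ t + y ^ t) := by
  have hmax : x + y ≤ 2 * max x y := by
    rcases le_total x y with h | h
    · rw [max_eq_right h]; linarith
    · rw [max_eq_left h]; linarith
  calc (x + y) ^ t ≤ (2 * max x y) ^ t :=
        Real.rpow_le_rpow (by positivity) hmax ht
  _ = 2 ^ t * (max x y) ^ t := Real.mul_rpow (by norm_num) (le_max_of_le_left hx)
  _ ≤ 2 ^ t * (x ^ t + y ^ t) := by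
      have h3 : (max x y) ^ t ≤ x ^ t + y ^ t := by
        rcases le_total x y with h | h
        · rw [max_eq_right h]; exact le_add_of_nonneg_left (Real.rpow_nonneg hx t)
        · rw [max_eq_left h]; exact le_add_of_nonneg_right (Real.rpow_nonneg hy t)
      have h2 : (0:ℝ) ≤ 2 ^ t := Real.rpow_nonneg (by norm_num) t
      nlinarith

lemma mvt_aux {s : ℝ} (hs : 1 ≤ s) {a b : ℝ} (hb : 0 ≤ b) (hba : b ≤ a) :
    a ^ s - b ^ s ≤ s * a ^ (s - 1) * (a - b) := by
  have ha : 0 ≤ a := hb.trans hba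
  have key := norm_image_sub_le_of_norm_deriv_le_segment'
    (f := fun x : ℝ => x ^ s) (f' := fun x : ℝ => s * x ^ (s - 1))
    (a := b) (b := a) (C := s * a ^ (s - 1))
    (fun x _ => (Real.hasDerivAt_rpow_const (p := s) (Or.inr hs)).hasDerivWithinAt)
    ?_ a (Set.right_mem_Icc.2 hba)
  · calc a ^ s - b ^ s ≤ |a ^ s - b ^ s| := le_abs_self _
    _ ≤ s * a ^ (s - 1) * (a - b) := by rwa [Real.norm_eq_abs] at key
  · intro x hx
    rw [Real.norm_eq_abs, abs_mul, abs_of_nonneg (by linarith : (0:ℝ) ≤ s),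
      abs_of_nonneg (Real.rpow_nonneg (hb.trans hx.1) _)]
    have h1 : x ^ (s - 1) ≤ a ^ (s - 1) :=
      Real.rpow_le_rpow (hb.trans hx.1) hx.2.le (by linarith)
    nlinarith

lemma kernel_aux {s : ℝ} (hs : 1 ≤ s) {a b d : ℝ} (ha : 0 ≤ a) (hb : 0 ≤ b) (hd : 0 ≤ d)
    (hab : a ≤ b + d) (hba : b ≤ a + d) :
    |a ^ s - b ^ s| ≤ s * (2 ^ s + 1) * ((b ^ (s - 1) + d ^ (s - 1)) * d) := by
  have hs0 : (0:ℝ) < s := by linarith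
  have h2s : (1:ℝ) ≤ 2 ^ s + 1 := by
    have : (0:ℝ) ≤ 2 ^ s := Real.rpow_nonneg (by norm_num) s
    linarith
  have hbs : (0:ℝ) ≤ b ^ (s-1) := Real.rpow_nonneg hb _
  have hds : (0:ℝ) ≤ d ^ (s-1) := Real.rpow_nonneg hd _
  rcases le_total b a with h | h
  · rw [abs_of_nonneg (by have := Real.rpow_le_rpow hb h hs0.le; linarith)]
    have hX : (0:ℝ) ≤ b ^ (s-1) + d ^ (s-1) := by linarith
    have h2 : a ^ (s-1) ≤ (b + d) ^ (s-1) :=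
      Real.rpow_le_rpow ha hab (by linarith)
    have h3 : (b + d) ^ (s-1) ≤ 2 ^ (s-1) * (b ^ (s-1) + d ^ (s-1)) :=
      two_rpow_aux (by linarith) hb hd
    have h4 : (2:ℝ) ^ (s-1) ≤ 2 ^ s := Real.rpow_le_rpow_left_iff (by norm_num) |>.2 (by linarith)
    have hA : a ^ (s-1) ≤ (2 ^ s + 1) * (b ^ (s-1) + d ^ (s-1)) := by
      nlinarith [mul_nonneg (sub_nonneg.2 h4) hX]
    calc a ^ s - b ^ s ≤ s * a ^ (s-1) * (a - b) := mvt_aux hs hb h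
    _ ≤ s * ((2 ^ s + 1) * (b ^ (s-1) + d ^ (s-1))) * d := by
        have hd5 : a - b ≤ d := by linarith
        have : s * a ^ (s-1) * (a - b) ≤ s * a ^ (s-1) * d :=
          mul_le_mul_of_nonneg_left hd5 (by positivity)
        have h6 : s * a ^ (s-1) * d ≤ s * ((2 ^ s + 1) * (b ^ (s-1) + d ^ (s-1))) * d := by
          have := mul_le_mul_of_nonneg_left hA hs0.le
          exact mul_le_mul_of_nonneg_right this hd
        linarith
    _ = s * (2 ^ s + 1) * ((b ^ (s-1) + d ^ (s-1)) * d) := by ring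
  · rw [abs_of_nonpos (by have := Real.rpow_le_rpow ha h hs0.le; linarith)]
    have hX : (0:ℝ) ≤ b ^ (s-1) + d ^ (s-1) := by linarith
    have hA : b ^ (s-1) ≤ (2 ^ s + 1) * (b ^ (s-1) + d ^ (s-1)) := by
      have h2s0 : (0:ℝ) ≤ 2 ^ s := Real.rpow_nonneg (by norm_num) s
      nlinarith
    calc -(a ^ s - b ^ s) = b ^ s - a ^ s := by ring
    _ ≤ s * b ^ (s-1) * (b - a) := mvt_aux hs ha h
    _ ≤ s * ((2 ^ s + 1) * (b ^ (s-1) + d ^ (s-1))) * d := by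
        have hd5 : b - a ≤ d := by linarith
        have : s * b ^ (s-1) * (b - a) ≤ s * b ^ (s-1) * d :=
          mul_le_mul_of_nonneg_left hd5 (by positivity)
        have h6 : s * b ^ (s-1) * d ≤ s * ((2 ^ s + 1) * (b ^ (s-1) + d ^ (s-1))) * d := by
          have := mul_le_mul_of_nonneg_left hA hs0.le
          exact mul_le_mul_of_nonneg_right this hd
        linarith
    _ = s * (2 ^ s + 1) * ((b ^ (s-1) + d ^ (s-1)) * d) := by ring

variable {n : ℕ}
local notation "E" => EuclideanSpace ℝ (Fin n)

lemma translate_aux (f : E → ℝ≥0∞) (ξ : E) :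
    ∫⁻ η, f (ξ - η) = ∫⁻ η, f η := by
  calc ∫⁻ η, f (ξ - η) = ∫⁻ η, (fun x => f (-x)) (η - ξ) := by simp [neg_sub]
  _ = ∫⁻ η, f (-η) := lintegral_sub_right_eq_self (fun x => f (-x)) ξ
  _ = ∫⁻ η, f η := by
      have := lintegral_map_equiv (μ := (volume : Measure E)) f (MeasurableEquiv.neg E)
      simp only [show ⇑(MeasurableEquiv.neg E) = (Neg.neg : E → E) from rfl,
        Measure.map_neg_eq_self] at this
      exact this.symm

lemma conv_comm_aux (p q : E → ℝ≥0∞) (ξ : E) :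
    ∫⁻ η, p (ξ - η) * q η = ∫⁻ η, p η * q (ξ - η) := by
  have h2 : ∀ η : E, ξ - (ξ - η) = η := fun η => by abel
  have := translate_aux (fun ζ => p ζ * q (ξ - ζ)) ξ
  simp only [h2] at this
  exact this

lemma sqrt_sq_aux (x : ℝ≥0∞) : (x ^ (2:ℕ)) ^ (1/2 : ℝ) = x := by
  rw [← ENNReal.rpow_natCast x 2, ← ENNReal.rpow_mul]
  norm_num

lemma young_aux (u v : E → ℝ≥0∞) (hu : Measurable u) (hv : Measurable v) :
    (∫⁻ ξ, (∫⁻ η, u (ξ - η) * v η) ^ 2) ^ (1/2 : ℝ) ≤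
      (∫⁻ ξ, u ξ) * ((∫⁻ ξ, (v ξ) ^ 2) ^ (1/2 : ℝ)) := by
  set I := ∫⁻ ξ, u ξ with hI
  have hconj : Real.HolderConjugate 2 2 := Real.HolderConjugate.two_two
  have step1 : ∀ ξ : E, (∫⁻ η, u (ξ - η) * v η) ^ 2 ≤ I * ∫⁻ η, u (ξ - η) * (v η) ^ 2 := by
    intro ξ
    have hum : Measurable fun η : E => u (ξ - η) := hu.comp (measurable_const.sub measurable_id)
    have hold := ENNReal.lintegral_mul_le_Lp_mul_Lq (volume : Measure E) hconj
      (f := fun η => (u (ξ - η)) ^ (1/2:ℝ)) (g := fun η => (u (ξ - η)) ^ (1/2:ℝ) * v η)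
      ((hum.pow_const _).aemeasurable) ((hum.pow_const _).mul hv).aemeasurable
    have e1 : ∀ η : E, (u (ξ - η)) ^ (1/2:ℝ) * ((u (ξ - η)) ^ (1/2:ℝ) * v η)
        = u (ξ - η) * v η := by
      intro η
      rw [← mul_assoc, ← ENNReal.rpow_add_of_nonneg _ _ (by norm_num) (by norm_num)]
      norm_num
    have e2 : ∀ η : E, ((u (ξ - η)) ^ (1/2:ℝ)) ^ (2:ℝ) = u (ξ - η) := by
      intro η; rw [← ENNReal.rpow_mul]; norm_num
    have e3 : ∀ η : E, ((u (ξ - η)) ^ (1/2:ℝ) * v η) ^ (2:ℝ)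
        = u (ξ - η) * (v η) ^ 2 := by
      intro η
      rw [ENNReal.mul_rpow_of_nonneg _ _ (by norm_num : (0:ℝ) ≤ 2), ← ENNReal.rpow_mul]
      norm_num
    simp only [Pi.mul_apply, e1, e2, e3] at hold
    rw [translate_aux u ξ] at hold
    calc (∫⁻ η, u (ξ - η) * v η) ^ 2
        ≤ (I ^ (1/2:ℝ) * (∫⁻ η, u (ξ - η) * (v η) ^ 2) ^ (1/2:ℝ)) ^ 2 := by
          exact pow_le_pow_left' hold 2
    _ = I * ∫⁻ η, u (ξ - η) * (v η) ^ 2 := by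
        rw [mul_pow]
        simp only [show ∀ x : ℝ≥0∞, (x ^ (1/2:ℝ)) ^ (2:ℕ) = x from fun x => by
          rw [← ENNReal.rpow_natCast (x ^ (1/2:ℝ)) 2, ← ENNReal.rpow_mul]; norm_num]
  have humeas : Measurable (Function.uncurry fun ξ η : E => u (ξ - η) * (v η) ^ 2) := by
    apply Measurable.mul
    · exact hu.comp (measurable_fst.sub measurable_snd)
    · exact ((hv.comp measurable_snd).pow_const 2)
  have step2 : (∫⁻ ξ, (∫⁻ η, u (ξ - η) * v η) ^ 2) ≤ I ^ 2 * ∫⁻ ξ, (v ξ) ^ 2 := by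
    calc (∫⁻ ξ, (∫⁻ η, u (ξ - η) * v η) ^ 2)
        ≤ ∫⁻ ξ, I * ∫⁻ η, u (ξ - η) * (v η) ^ 2 := lintegral_mono step1
    _ = I * ∫⁻ ξ, ∫⁻ η, u (ξ - η) * (v η) ^ 2 := by
        rw [lintegral_const_mul _ humeas.lintegral_prod_right]
    _ = I * ∫⁻ η, ∫⁻ ξ, u (ξ - η) * (v η) ^ 2 := by
        rw [lintegral_lintegral_swap humeas.aemeasurable]
    _ = I * ∫⁻ η, (v η) ^ 2 * ∫⁻ ξ, u (ξ - η) := by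
        congr 1; apply lintegral_congr; intro η
        have hm : Measurable fun ξ : E => u (ξ - η) :=
          hu.comp (measurable_id.sub measurable_const)
        calc ∫⁻ ξ, u (ξ - η) * v η ^ 2 = ∫⁻ ξ, v η ^ 2 * u (ξ - η) :=
              lintegral_congr fun ξ => mul_comm _ _
        _ = (v η) ^ 2 * ∫⁻ ξ, u (ξ - η) := lintegral_const_mul _ hm
    _ = I ^ 2 * ∫⁻ ξ, (v ξ) ^ 2 := by
        have h7 : ∀ η : E, ∫⁻ ξ, u (ξ - η) = I := fun η => lintegral_sub_right_eq_self u η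
        simp only [h7]
        rw [lintegral_mul_const _ (hv.pow_const 2)]
        ring
  calc (∫⁻ ξ, (∫⁻ η, u (ξ - η) * v η) ^ 2) ^ (1/2 : ℝ)
      ≤ (I ^ 2 * ∫⁻ ξ, (v ξ) ^ 2) ^ (1/2 : ℝ) :=
        ENNReal.rpow_le_rpow step2 (by norm_num)
  _ = I * ((∫⁻ ξ, (v ξ) ^ 2) ^ (1/2 : ℝ)) := by
      rw [ENNReal.mul_rpow_of_nonneg _ _ (by norm_num : (0:ℝ) ≤ 1/2), sqrt_sq_aux]

lemma split_aux {s : ℝ} (hs : 1 ≤ s) {b d : ℝ} (F G : ℝ) (hb : 0 ≤ b) (hd : 0 ≤ d) :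
    ((b ^ (s-1) + d ^ (s-1)) * d) * ((F * b) * G)
      = (d * F) * (b ^ s * G) + (d ^ s * F) * (b * G) := by
  have hb' : b ^ (s-1) * b = b ^ s := by
    rcases eq_or_lt_of_le hb with h | h
    · rw [← h]; rw [Real.zero_rpow (by linarith : s ≠ 0)]; ring
    · nth_rewrite 2 [← Real.rpow_one b]
      rw [← Real.rpow_add h]; norm_num
  have hd' : d ^ (s-1) * d = d ^ s := by
    rcases eq_or_lt_of_le hd with h | h
    · rw [← h]; rw [Real.zero_rpow (by linarith : s ≠ 0)]; ring
    · nth_rewrite 2 [← Real.rpow_one d]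
      rw [← Real.rpow_add h]; norm_num
  linear_combination (d * F * G) * hb' + (F * b * G) * hd'

lemma coord_aux {n : ℕ} (η : EuclideanSpace ℝ (Fin n)) (j : Fin n) : |η j| ≤ ‖η‖ := by
  rw [EuclideanSpace.norm_eq]
  have h1 : ‖η j‖ ^ 2 ≤ ∑ i, ‖η i‖ ^ 2 :=
    Finset.single_le_sum (f := fun i => ‖η i‖ ^ 2) (fun i _ => sq_nonneg _) (Finset.mem_univ j)
  calc |η j| = Real.sqrt (‖η j‖ ^ 2) := by
        rw [Real.sqrt_sq_eq_abs, abs_norm, Real.norm_eq_abs]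
  _ ≤ Real.sqrt (∑ i, ‖η i‖ ^ 2) := Real.sqrt_le_sqrt h1

lemma pow_weight_aux {s : ℝ} (hs : 1 ≤ s) {b : ℝ} (hb : 0 ≤ b) :
    (b ^ s) ^ 2 ≤ (1 + b ^ 2) ^ s := by
  have h1 : (b ^ s) ^ 2 = (b ^ 2) ^ s := by
    rw [← Real.rpow_natCast (b ^ s) 2, ← Real.rpow_natCast b 2,
      ← Real.rpow_mul hb, ← Real.rpow_mul hb, mul_comm]
  rw [h1]
  exact Real.rpow_le_rpow (by positivity) (by linarith [sq_nonneg b]) (by linarith)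

lemma Lp2_add_aux (f g : E → ℝ≥0∞) (hf : Measurable f) (hg : Measurable g) :
    (∫⁻ ξ, (f ξ + g ξ) ^ 2) ^ (1/2 : ℝ) ≤
      (∫⁻ ξ, (f ξ) ^ 2) ^ (1/2 : ℝ) + (∫⁻ ξ, (g ξ) ^ 2) ^ (1/2 : ℝ) := by
  have h := ENNReal.lintegral_Lp_add_le (μ := (volume : Measure E))
    hf.aemeasurable hg.aemeasurable (p := 2) one_le_two
  simp only [Pi.add_apply] at h
  simp_rw [show ((2:ℝ)) = ((2:ℕ):ℝ) by norm_num, ENNReal.rpow_natCast] at h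
  convert h using 3 <;> norm_num

lemma lin_cmp_aux {V : Type*} [NormedAddCommGroup V] (h : E → V) (ξ : E) :
    ENNReal.ofReal (‖ξ‖ * ‖h ξ‖) ≤
      ENNReal.ofReal (1 + ‖ξ‖) * (‖h ξ‖₊ : ℝ≥0∞) := by
  calc ENNReal.ofReal (‖ξ‖ * ‖h ξ‖)
      = ENNReal.ofReal ‖ξ‖ * ENNReal.ofReal ‖h ξ‖ := ENNReal.ofReal_mul (norm_nonneg _)
  _ ≤ ENNReal.ofReal (1 + ‖ξ‖) * ENNReal.ofReal ‖h ξ‖ :=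
      mul_le_mul_left (ENNReal.ofReal_le_ofReal (by linarith [norm_nonneg ξ])) _
  _ = ENNReal.ofReal (1 + ‖ξ‖) * (‖h ξ‖₊ : ℝ≥0∞) := by rw [ofReal_norm, enorm_eq_nnnorm]

lemma sq_cmp_aux {s : ℝ} (hs : 1 ≤ s) {V : Type*} [NormedAddCommGroup V] (h : E → V) (ξ : E) :
    (ENNReal.ofReal (‖ξ‖ ^ s * ‖h ξ‖)) ^ 2 ≤
      ENNReal.ofReal ((1 + ‖ξ‖ ^ 2) ^ s) * (‖h ξ‖₊ : ℝ≥0∞) ^ 2 := by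
  have hb : (0:ℝ) ≤ ‖ξ‖ ^ s := Real.rpow_nonneg (norm_nonneg _) _
  rw [← ENNReal.ofReal_pow (mul_nonneg hb (norm_nonneg _)), mul_pow,
    ENNReal.ofReal_mul (by positivity), ENNReal.ofReal_pow (norm_nonneg _),
    ofReal_norm, enorm_eq_nnnorm]
  exact mul_le_mul_left (ENNReal.ofReal_le_ofReal
    (pow_weight_aux hs (norm_nonneg ξ))) _

theorem stmt4 (n : ℕ) (s : ℝ) (hs : 1 ≤ s) :
    ∃ C : ℝ≥0∞, C ≠ ⊤ ∧
      ∀ (fhat : EuclideanSpace ℝ (Fin n) → (Fin n → ℂ))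
        (ghat Hhat : EuclideanSpace ℝ (Fin n) → ℂ),
        Measurable fhat → Measurable ghat →
        (∀ ξ, Hhat ξ = ∫ η, ((‖ξ‖ ^ s - ‖η‖ ^ s : ℝ) : ℂ) *
            (∑ j, fhat (ξ - η) j * (Complex.I * ((η j : ℝ) : ℂ))) * ghat η) →
        (∫⁻ ξ, (‖Hhat ξ‖₊ : ℝ≥0∞) ^ 2) ^ (1/2 : ℝ) ≤
          C * ((∫⁻ ξ, ENNReal.ofReal (1 + ‖ξ‖) * (‖fhat ξ‖₊ : ℝ≥0∞)) *
                (∫⁻ ξ, ENNReal.ofReal ((1 + ‖ξ‖ ^ 2) ^ s) * (‖ghat ξ‖₊ : ℝ≥0∞) ^ 2) ^ (1/2 : ℝ) +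
              (∫⁻ ξ, ENNReal.ofReal (1 + ‖ξ‖) * (‖ghat ξ‖₊ : ℝ≥0∞)) *
                (∫⁻ ξ, ENNReal.ofReal ((1 + ‖ξ‖ ^ 2) ^ s) * (‖fhat ξ‖₊ : ℝ≥0∞) ^ 2) ^ (1/2 : ℝ)) := by
  classical
  set κ : ℝ := s * (2 ^ s + 1) with hκ
  have h2s : (0:ℝ) ≤ 2 ^ s := Real.rpow_nonneg (by norm_num) s
  have hκ0 : 0 ≤ κ := by nlinarith
  refine ⟨ENNReal.ofReal (κ * n), ENNReal.ofReal_ne_top, ?_⟩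
  set c : ℝ≥0∞ := ENNReal.ofReal (κ * n) with hc
  intro fhat ghat Hhat hfm hgm hH
  set u₁ : EuclideanSpace ℝ (Fin n) → ℝ≥0∞ :=
    fun ζ => ENNReal.ofReal (‖ζ‖ * ‖fhat ζ‖) with hu₁
  set v₁ : EuclideanSpace ℝ (Fin n) → ℝ≥0∞ :=
    fun η => ENNReal.ofReal (‖η‖ ^ s * ‖ghat η‖) with hv₁
  set u₂ : EuclideanSpace ℝ (Fin n) → ℝ≥0∞ :=
    fun ζ => ENNReal.ofReal (‖ζ‖ ^ s * ‖fhat ζ‖) with hu₂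
  set v₂ : EuclideanSpace ℝ (Fin n) → ℝ≥0∞ :=
    fun η => ENNReal.ofReal (‖η‖ * ‖ghat η‖) with hv₂
  have hu₁m : Measurable u₁ := (measurable_norm.mul hfm.norm).ennreal_ofReal
  have hv₁m : Measurable v₁ :=
    ((measurable_norm.pow_const s).mul hgm.norm).ennreal_ofReal
  have hu₂m : Measurable u₂ :=
    ((measurable_norm.pow_const s).mul hfm.norm).ennreal_ofReal
  have hv₂m : Measurable v₂ := (measurable_norm.mul hgm.norm).ennreal_ofReal
  set W₁ : EuclideanSpace ℝ (Fin n) → ℝ≥0∞ :=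
    fun ξ => ∫⁻ η, u₁ (ξ - η) * v₁ η with hW₁
  set W₂ : EuclideanSpace ℝ (Fin n) → ℝ≥0∞ :=
    fun ξ => ∫⁻ η, u₂ (ξ - η) * v₂ η with hW₂
  have hW₁m : Measurable W₁ := by
    apply Measurable.lintegral_prod_right (f := fun ξ η => u₁ (ξ - η) * v₁ η)
    exact (hu₁m.comp (measurable_fst.sub measurable_snd)).mul (hv₁m.comp measurable_snd)
  have hW₂m : Measurable W₂ := by
    apply Measurable.lintegral_prod_right (f := fun ξ η => u₂ (ξ - η) * v₂ η)
    exact (hu₂m.comp (measurable_fst.sub measurable_snd)).mul (hv₂m.comp measurable_snd)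
  -- pointwise bound
  have hub : ∀ ξ, (‖Hhat ξ‖₊ : ℝ≥0∞) ≤ c * (W₁ ξ + W₂ ξ) := by
    intro ξ
    rw [hH ξ]
    refine le_trans (enorm_integral_le_lintegral_enorm _) ?_
    have hpt : ∀ η, (‖(((‖ξ‖ ^ s - ‖η‖ ^ s : ℝ) : ℂ) *
        (∑ j, fhat (ξ - η) j * (Complex.I * ((η j : ℝ) : ℂ))) * ghat η)‖₊ : ℝ≥0∞) ≤
        c * (u₁ (ξ - η) * v₁ η + u₂ (ξ - η) * v₂ η) := by
      intro η
      have hb : (0:ℝ) ≤ ‖η‖ := norm_nonneg _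
      have hd : (0:ℝ) ≤ ‖ξ - η‖ := norm_nonneg _
      have hF : (0:ℝ) ≤ ‖fhat (ξ - η)‖ := norm_nonneg _
      have hG : (0:ℝ) ≤ ‖ghat η‖ := norm_nonneg _
      have hker : |‖ξ‖ ^ s - ‖η‖ ^ s| ≤
          κ * ((‖η‖ ^ (s-1) + ‖ξ - η‖ ^ (s-1)) * ‖ξ - η‖) := by
        rw [hκ]
        apply kernel_aux hs (norm_nonneg ξ) hb hd
        · calc ‖ξ‖ = ‖η + (ξ - η)‖ := by congr 1; abel
          _ ≤ ‖η‖ + ‖ξ - η‖ := norm_add_le _ _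
        · calc ‖η‖ = ‖ξ - (ξ - η)‖ := by congr 1; abel
          _ ≤ ‖ξ‖ + ‖ξ - η‖ := norm_sub_le _ _
      have hsum : ‖∑ j, fhat (ξ - η) j * (Complex.I * ((η j : ℝ) : ℂ))‖ ≤
          n * (‖fhat (ξ - η)‖ * ‖η‖) := by
        calc ‖∑ j, fhat (ξ - η) j * (Complex.I * ((η j : ℝ) : ℂ))‖
            ≤ ∑ j, ‖fhat (ξ - η) j * (Complex.I * ((η j : ℝ) : ℂ))‖ :=
              norm_sum_le _ _
        _ ≤ ∑ _j : Fin n, ‖fhat (ξ - η)‖ * ‖η‖ := by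
            apply Finset.sum_le_sum
            intro j _
            rw [norm_mul, norm_mul, Complex.norm_I, one_mul, Complex.norm_real]
            refine mul_le_mul (norm_le_pi_norm _ j) ?_ (norm_nonneg _) hF
            rw [Real.norm_eq_abs]; exact coord_aux η j
        _ = n * (‖fhat (ξ - η)‖ * ‖η‖) := by
            simp [Finset.sum_const, Finset.card_univ]
      have hreal : ‖(((‖ξ‖ ^ s - ‖η‖ ^ s : ℝ) : ℂ) *
          (∑ j, fhat (ξ - η) j * (Complex.I * ((η j : ℝ) : ℂ))) * ghat η)‖ ≤
          (κ * n) * ((‖ξ - η‖ * ‖fhat (ξ - η)‖) * (‖η‖ ^ s * ‖ghat η‖) +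
            (‖ξ - η‖ ^ s * ‖fhat (ξ - η)‖) * (‖η‖ * ‖ghat η‖)) := by
        rw [norm_mul, norm_mul, Complex.norm_real, Real.norm_eq_abs]
        calc |‖ξ‖ ^ s - ‖η‖ ^ s| *
              ‖∑ j, fhat (ξ - η) j * (Complex.I * ((η j : ℝ) : ℂ))‖ * ‖ghat η‖
            ≤ (κ * ((‖η‖ ^ (s-1) + ‖ξ - η‖ ^ (s-1)) * ‖ξ - η‖)) *
              (n * (‖fhat (ξ - η)‖ * ‖η‖)) * ‖ghat η‖ := by
              refine mul_le_mul_of_nonneg_right ?_ hG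
              exact mul_le_mul hker hsum (norm_nonneg _)
                (mul_nonneg hκ0 (by positivity))
        _ = (κ * n) * (((‖η‖ ^ (s-1) + ‖ξ - η‖ ^ (s-1)) * ‖ξ - η‖) *
              ((‖fhat (ξ - η)‖ * ‖η‖) * ‖ghat η‖)) := by ring
        _ = (κ * n) * ((‖ξ - η‖ * ‖fhat (ξ - η)‖) * (‖η‖ ^ s * ‖ghat η‖) +
              (‖ξ - η‖ ^ s * ‖fhat (ξ - η)‖) * (‖η‖ * ‖ghat η‖)) := by
            rw [split_aux hs (‖fhat (ξ - η)‖) (‖ghat η‖) hb hd]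
      calc (‖(((‖ξ‖ ^ s - ‖η‖ ^ s : ℝ) : ℂ) *
            (∑ j, fhat (ξ - η) j * (Complex.I * ((η j : ℝ) : ℂ))) * ghat η)‖₊ : ℝ≥0∞)
          = ENNReal.ofReal ‖(((‖ξ‖ ^ s - ‖η‖ ^ s : ℝ) : ℂ) *
            (∑ j, fhat (ξ - η) j * (Complex.I * ((η j : ℝ) : ℂ))) * ghat η)‖ :=
            (ofReal_norm _).symm
      _ ≤ ENNReal.ofReal ((κ * n) * ((‖ξ - η‖ * ‖fhat (ξ - η)‖) * (‖η‖ ^ s * ‖ghat η‖) +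
            (‖ξ - η‖ ^ s * ‖fhat (ξ - η)‖) * (‖η‖ * ‖ghat η‖))) :=
            ENNReal.ofReal_le_ofReal hreal
      _ = c * (u₁ (ξ - η) * v₁ η + u₂ (ξ - η) * v₂ η) := by
          rw [ENNReal.ofReal_mul (mul_nonneg hκ0 (Nat.cast_nonneg n)),
            ENNReal.ofReal_add (by positivity) (by positivity),
            ENNReal.ofReal_mul (mul_nonneg hd hF),
            ENNReal.ofReal_mul (mul_nonneg (Real.rpow_nonneg hd s) hF)]
    calc (∫⁻ η, (‖(((‖ξ‖ ^ s - ‖η‖ ^ s : ℝ) : ℂ) *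
          (∑ j, fhat (ξ - η) j * (Complex.I * ((η j : ℝ) : ℂ))) * ghat η)‖₊ : ℝ≥0∞))
        ≤ ∫⁻ η, c * (u₁ (ξ - η) * v₁ η + u₂ (ξ - η) * v₂ η) := lintegral_mono hpt
    _ = c * (W₁ ξ + W₂ ξ) := by
        have hmeas : Measurable fun η : EuclideanSpace ℝ (Fin n) => u₁ (ξ - η) * v₁ η :=
          (hu₁m.comp (measurable_const.sub measurable_id)).mul hv₁m
        rw [lintegral_const_mul' _ _ ENNReal.ofReal_ne_top]
        congr 1
        exact lintegral_add_left hmeas _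
  -- main chain
  calc (∫⁻ ξ, (‖Hhat ξ‖₊ : ℝ≥0∞) ^ 2) ^ (1/2 : ℝ)
      ≤ (∫⁻ ξ, (c * (W₁ ξ + W₂ ξ)) ^ 2) ^ (1/2 : ℝ) := by
        apply ENNReal.rpow_le_rpow _ (by norm_num)
        exact lintegral_mono fun ξ => pow_le_pow_left' (hub ξ) 2
  _ = c * (∫⁻ ξ, (W₁ ξ + W₂ ξ) ^ 2) ^ (1/2 : ℝ) := by
      simp_rw [mul_pow]
      rw [lintegral_const_mul' _ _ (ENNReal.pow_ne_top ENNReal.ofReal_ne_top),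
        ENNReal.mul_rpow_of_nonneg _ _ (by norm_num : (0:ℝ) ≤ 1/2), sqrt_sq_aux]
  _ ≤ c * ((∫⁻ ξ, (W₁ ξ) ^ 2) ^ (1/2 : ℝ) + (∫⁻ ξ, (W₂ ξ) ^ 2) ^ (1/2 : ℝ)) := by
      gcongr
      exact Lp2_add_aux W₁ W₂ hW₁m hW₂m
  _ ≤ c * ((∫⁻ ξ, u₁ ξ) * ((∫⁻ ξ, (v₁ ξ) ^ 2) ^ (1/2 : ℝ)) +
        (∫⁻ ξ, v₂ ξ) * ((∫⁻ ξ, (u₂ ξ) ^ 2) ^ (1/2 : ℝ))) := by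
      gcongr
      · exact young_aux u₁ v₁ hu₁m hv₁m
      · have hcomm : ∀ ξ, W₂ ξ = ∫⁻ η, v₂ (ξ - η) * u₂ η := by
          intro ξ
          show (∫⁻ η, u₂ (ξ - η) * v₂ η) = _
          rw [conv_comm_aux u₂ v₂ ξ]
          exact lintegral_congr fun η => mul_comm _ _
        calc (∫⁻ ξ, (W₂ ξ) ^ 2) ^ (1/2 : ℝ)
            = (∫⁻ ξ, (∫⁻ η, v₂ (ξ - η) * u₂ η) ^ 2) ^ (1/2 : ℝ) := by simp_rw [hcomm]
        _ ≤ _ := young_aux v₂ u₂ hv₂m hu₂m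
  _ ≤ c * ((∫⁻ ξ, ENNReal.ofReal (1 + ‖ξ‖) * (‖fhat ξ‖₊ : ℝ≥0∞)) *
        (∫⁻ ξ, ENNReal.ofReal ((1 + ‖ξ‖ ^ 2) ^ s) * (‖ghat ξ‖₊ : ℝ≥0∞) ^ 2) ^ (1/2 : ℝ) +
      (∫⁻ ξ, ENNReal.ofReal (1 + ‖ξ‖) * (‖ghat ξ‖₊ : ℝ≥0∞)) *
        (∫⁻ ξ, ENNReal.ofReal ((1 + ‖ξ‖ ^ 2) ^ s) * (‖fhat ξ‖₊ : ℝ≥0∞) ^ 2) ^ (1/2 : ℝ)) := by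
      gcongr
      · exact lin_cmp_aux fhat _
      · exact sq_cmp_aux hs ghat _
      · exact lin_cmp_aux ghat _
      · exact sq_cmp_aux hs fhat _
end

section
/- Let γ satisfy γ(r) ≤ C(r⁻¹+r⁻²), γ' ≤ 0 and r|γ'(r)| ≤ Cγ(r). Let Γ be the Fourier multiplier with symbol γ(|ξ|) and Λ = (−Δ)^{1/2}. Then for g ∈ L²(ℝⁿ) and b with ‖b‖_{Y¹} = ∫(1+|ξ|)|b̂(ξ)|dξ < ∞, the high-frequency part of the commutator satisfies ‖P_{≥1} Λ^{1/2} [Γ^{1/2}, b] ∇g‖_{L²} ≤ C ‖b‖_{Y¹} ‖g‖_{L²}, where P_{≥1} is the Fourier projection onto {|ξ| ≥ 1}. -/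
set_option maxHeartbeats 1000000

open MeasureTheory ENNReal Real


lemma sqrt_symbol_bound {C : ℝ} (hC : 0 < C) {γ : ℝ → ℝ}
    (hpos : ∀ r > 0, 0 ≤ γ r)
    (hdiff : ∀ r > 0, DifferentiableAt ℝ γ r)
    (hbd : ∀ r > 0, γ r ≤ C * (r⁻¹ + (r ^ 2)⁻¹))
    (hder : ∀ r > 0, deriv γ r ≤ 0)
    (hmul : ∀ r > 0, r * |deriv γ r| ≤ C * γ r)
    {a b : ℝ} (ha : 1 ≤ a) (hb : 0 ≤ b) :
    Real.sqrt a * |Real.sqrt (γ a) - Real.sqrt (γ b)| * b ≤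
      (4 * Real.sqrt (2 * C) + 6 * C * Real.sqrt (3 * C)) * |a - b| := by
  set K : ℝ := 4 * Real.sqrt (2 * C) + 6 * C * Real.sqrt (3 * C) with hKdef
  have ha0 : (0:ℝ) < a := lt_of_lt_of_le one_pos ha
  have hKnn : 0 ≤ K := by positivity
  -- antitone
  have hA : ∀ x y : ℝ, 0 < x → x ≤ y → γ y ≤ γ x := by
    intro x y hx hxy
    have : AntitoneOn γ (Set.Ioi 0) := by
      apply antitoneOn_of_deriv_nonpos (convex_Ioi 0)
      · intro r hr
        exact (hdiff r hr).continuousAt.continuousWithinAt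
      · intro r hr
        rw [interior_Ioi] at hr
        exact (hdiff r hr).differentiableWithinAt
      · intro r hr
        rw [interior_Ioi] at hr
        exact hder r hr
    exact this hx (lt_of_lt_of_le hx hxy) hxy
  rcases eq_or_lt_of_le hb with hb0 | hb0
  · rw [← hb0]; simp [mul_nonneg hKnn (abs_nonneg _)]
  rcases le_or_gt b (a / 2) with hcase | hcase
  · -- Case b ≤ a/2
    have hba : b ≤ a := hcase.trans (by linarith)
    have h1 : γ a ≤ γ b := hA b a hb0 hba
    have h2 : |Real.sqrt (γ a) - Real.sqrt (γ b)| ≤ Real.sqrt (γ b) := by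
      rw [abs_sub_comm, abs_of_nonneg (sub_nonneg.2 (Real.sqrt_le_sqrt h1))]
      have := Real.sqrt_nonneg (γ a); linarith
    have h3 : b ^ 2 * γ b ≤ 2 * C * a := by
      have hγb := hbd b hb0
      have e : C * (b⁻¹ + (b ^ 2)⁻¹) * b ^ 2 = C * (b + 1) := by
        field_simp
      nlinarith [mul_le_mul_of_nonneg_right hγb (sq_nonneg b)]
    have h4 : Real.sqrt (γ b) * b ≤ Real.sqrt (2 * C * a) := by
      have : Real.sqrt (γ b) * b = Real.sqrt (b ^ 2 * γ b) := by
        rw [Real.sqrt_mul (sq_nonneg b), Real.sqrt_sq hb, mul_comm]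
      rw [this]
      exact Real.sqrt_le_sqrt h3
    have h5 : Real.sqrt a * Real.sqrt (2 * C * a) = Real.sqrt (2 * C) * a := by
      rw [← Real.sqrt_mul ha0.le, show a * (2 * C * a) = (2 * C) * a ^ 2 by ring,
        Real.sqrt_mul (by positivity), Real.sqrt_sq ha0.le]
    have habs : |a - b| = a - b := abs_of_nonneg (by linarith)
    calc Real.sqrt a * |Real.sqrt (γ a) - Real.sqrt (γ b)| * b
        = Real.sqrt a * (|Real.sqrt (γ a) - Real.sqrt (γ b)| * b) := by ring
      _ ≤ Real.sqrt a * (Real.sqrt (γ b) * b) := by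
          apply mul_le_mul_of_nonneg_left _ (Real.sqrt_nonneg a)
          exact mul_le_mul_of_nonneg_right h2 hb
      _ ≤ Real.sqrt a * Real.sqrt (2 * C * a) := by
          apply mul_le_mul_of_nonneg_left h4 (Real.sqrt_nonneg a)
      _ = Real.sqrt (2 * C) * a := h5
      _ ≤ K * |a - b| := by
          rw [habs]
          nlinarith [Real.sqrt_nonneg (2 * C), Real.sqrt_nonneg (3 * C),
            mul_nonneg (mul_nonneg hC.le (Real.sqrt_nonneg (3*C))) (show (0:ℝ) ≤ a - b by linarith)]
  rcases le_or_gt (2 * a) b with hcase2 | hcase2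
  · -- Case 2a ≤ b
    have hab : a ≤ b := by linarith
    have h1 : γ b ≤ γ a := hA a b ha0 hab
    have h2 : |Real.sqrt (γ a) - Real.sqrt (γ b)| ≤ Real.sqrt (γ a) := by
      rw [abs_of_nonneg (sub_nonneg.2 (Real.sqrt_le_sqrt h1))]
      have := Real.sqrt_nonneg (γ b); linarith
    have h3 : γ a ≤ 2 * C * a⁻¹ := by
      have hγa := hbd a ha0
      have e1 : (a ^ 2)⁻¹ ≤ a⁻¹ := by
        apply inv_anti₀ ha0
        nlinarith
      nlinarith
    have h4 : Real.sqrt (γ a) ≤ Real.sqrt (2 * C) * Real.sqrt a⁻¹ := by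
      rw [← Real.sqrt_mul (by positivity)]
      exact Real.sqrt_le_sqrt h3
    have h5 : Real.sqrt a * Real.sqrt a⁻¹ = 1 := by
      rw [← Real.sqrt_mul ha0.le, mul_inv_cancel₀ ha0.ne', Real.sqrt_one]
    have habs : |a - b| = b - a := by rw [abs_sub_comm]; exact abs_of_nonneg (by linarith)
    calc Real.sqrt a * |Real.sqrt (γ a) - Real.sqrt (γ b)| * b
        ≤ Real.sqrt a * (Real.sqrt (2 * C) * Real.sqrt a⁻¹) * b := by
          apply mul_le_mul_of_nonneg_right _ hb
          exact mul_le_mul_of_nonneg_left (h2.trans h4) (Real.sqrt_nonneg a)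
      _ = Real.sqrt (2 * C) * (Real.sqrt a * Real.sqrt a⁻¹) * b := by ring
      _ = Real.sqrt (2 * C) * b := by rw [h5]; ring
      _ ≤ K * |a - b| := by
          rw [habs]
          nlinarith [Real.sqrt_nonneg (2 * C), Real.sqrt_nonneg (3 * C),
            mul_nonneg (mul_nonneg hC.le (Real.sqrt_nonneg (3*C))) (show (0:ℝ) ≤ b - a by linarith)]
  · -- Case a/2 < b < 2a
    obtain ⟨m, M, hmin, hmax⟩ : ∃ m M : ℝ, m = min a b ∧ M = max a b := ⟨_, _, rfl, rfl⟩
    have hm0 : 0 < m := hmin ▸ lt_min ha0 hb0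
    have hmhalf : a / 2 ≤ m := hmin ▸ le_min (by linarith) hcase.le
    have hmM : m ≤ M := by rw [hmin, hmax]; exact min_le_max
    have hM0 : 0 < M := lt_of_lt_of_le hm0 hmM
    have hMle : M ≤ 2 * m := by
      rw [hmin, hmax]
      rcases le_total a b with h | h
      · rw [min_eq_left h, max_eq_right h]; linarith
      · rw [min_eq_right h, max_eq_left h]; linarith
    have hMm_abs : M - m = |a - b| := by
      rw [hmin, hmax, max_sub_min_eq_abs, abs_sub_comm]
    have hbM : b ≤ M := hmax ▸ le_max_right a b
    have ham : m ≤ a := hmin ▸ min_le_left a b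
    have hbm : m ≤ b := hmin ▸ min_le_right a b
    have hγmM : γ M ≤ γ m := hA m M hm0 hmM
    by_cases hγm : γ m ≤ 0
    · have hga : γ a = 0 := le_antisymm ((hA m a hm0 ham).trans hγm) (hpos a ha0)
      have hgb : γ b = 0 := le_antisymm ((hA m b hm0 hbm).trans hγm) (hpos b hb0)
      rw [hga, hgb, sub_self, abs_zero, mul_zero, zero_mul]
      exact mul_nonneg hKnn (abs_nonneg _)
    push_neg at hγm
    rcases eq_or_ne a b with hab | hab
    · simp [hab, mul_nonneg hKnn (abs_nonneg _)]
    have hmltM : m < M := by rw [hmin, hmax]; exact min_lt_max.2 hab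
    -- MVT
    obtain ⟨c, hc, hc'⟩ := exists_deriv_eq_slope γ hmltM
      (fun x hx => (hdiff x (lt_of_lt_of_le hm0 hx.1)).continuousAt.continuousWithinAt)
      (fun x hx => ((hdiff x (lt_of_lt_of_le hm0 hx.1.le)).differentiableWithinAt))
    have hc0 : 0 < c := lt_of_lt_of_le hm0 hc.1.le
    have hγc : γ c ≤ γ m := hA m c hm0 hc.1.le
    have hcd : |deriv γ c| * m ≤ C * γ m := by
      have h1 : |deriv γ c| * m ≤ |deriv γ c| * c :=
        mul_le_mul_of_nonneg_left hc.1.le (abs_nonneg _)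
      have h2 := hmul c hc0
      have h3 : C * γ c ≤ C * γ m := mul_le_mul_of_nonneg_left hγc hC.le
      rw [mul_comm] at h2
      linarith
    have hslope : (γ m - γ M) * m ≤ C * γ m * (M - m) := by
      have e : deriv γ c * (M - m) = γ M - γ m := by
        rw [hc', div_mul_cancel₀ _ (sub_ne_zero.2 hmltM.ne')]
      have h1 : γ m - γ M = |deriv γ c| * (M - m) := by
        rw [abs_of_nonpos (hder c hc0)]
        linarith [e]
      rw [h1]
      calc |deriv γ c| * (M - m) * m = (|deriv γ c| * m) * (M - m) := by ring
        _ ≤ C * γ m * (M - m) := mul_le_mul_of_nonneg_right hcd (by linarith)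
    obtain ⟨s, hs⟩ : ∃ s, s = Real.sqrt (γ m) := ⟨_, rfl⟩
    obtain ⟨S, hS⟩ : ∃ S, S = Real.sqrt (γ M) := ⟨_, rfl⟩
    obtain ⟨t, ht⟩ : ∃ t, t = Real.sqrt m := ⟨_, rfl⟩
    have hs0 : 0 < s := hs ▸ Real.sqrt_pos.2 hγm
    have hS0 : 0 ≤ S := hS ▸ Real.sqrt_nonneg _
    have hsS : S ≤ s := by rw [hs, hS]; exact Real.sqrt_le_sqrt hγmM
    have hs2 : s ^ 2 = γ m := hs ▸ Real.sq_sqrt (hpos m hm0)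
    have hS2 : S ^ 2 = γ M := hS ▸ Real.sq_sqrt (hpos M hM0)
    have ht0 : 0 < t := ht ▸ Real.sqrt_pos.2 hm0
    have ht2 : t ^ 2 = m := ht ▸ Real.sq_sqrt hm0.le
    have hΔm : (s - S) * m ≤ C * s * (M - m) := by
      have h1 : (s - S) * s ≤ γ m - γ M := by
        rw [← hs2, ← hS2]
        have hSs : S * S ≤ S * s := mul_le_mul_of_nonneg_left hsS hS0
        nlinarith [hSs]
      have h2 : (s - S) * s * m ≤ C * γ m * (M - m) :=
        le_trans (mul_le_mul_of_nonneg_right h1 hm0.le) hslope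
      rw [← hs2] at h2
      have h2' : (s - S) * m * s ≤ C * s * (M - m) * s := by linarith [h2]
      exact le_of_mul_le_mul_right h2' hs0
    have hst : s * t ≤ Real.sqrt (3 * C) := by
      have h1 : γ m * m ≤ 3 * C := by
        have hγb := hbd m hm0
        have hminv : m⁻¹ ≤ 2 := by
          rw [show (2:ℝ) = (2⁻¹)⁻¹ by norm_num]
          exact inv_anti₀ (by norm_num) (by linarith)
        have e : C * (m⁻¹ + (m ^ 2)⁻¹) * m = C * (1 + m⁻¹) := by
          field_simp
        have h2 : γ m * m ≤ C * (1 + m⁻¹) := by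
          rw [← e]; exact mul_le_mul_of_nonneg_right hγb hm0.le
        have h3 : C * (1 + m⁻¹) ≤ C * 3 := mul_le_mul_of_nonneg_left (by linarith) hC.le
        linarith
      calc s * t = Real.sqrt (γ m * m) := by
            rw [hs, ht, ← Real.sqrt_mul (hpos m hm0)]
        _ ≤ Real.sqrt (3 * C) := Real.sqrt_le_sqrt h1
    have hsa : Real.sqrt a ≤ Real.sqrt 2 * t := by
      rw [ht, ← Real.sqrt_mul (by norm_num : (0:ℝ) ≤ 2)]
      apply Real.sqrt_le_sqrt
      linarith
    have hb4 : b ≤ 4 * t ^ 2 := by rw [ht2]; linarith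
    have habsΔ : |Real.sqrt (γ a) - Real.sqrt (γ b)| = s - S := by
      rw [hs, hS, hmin, hmax]
      rcases le_total a b with h | h
      · rw [min_eq_left h, max_eq_right h,
          abs_of_nonneg (sub_nonneg.2 (Real.sqrt_le_sqrt (hA a b ha0 h)))]
      · rw [min_eq_right h, max_eq_left h, abs_sub_comm,
          abs_of_nonneg (sub_nonneg.2 (Real.sqrt_le_sqrt (hA b a hb0 h)))]
    have hsqrt2 : Real.sqrt 2 ≤ 1.5 := by
      nlinarith [Real.sq_sqrt (show (0:ℝ) ≤ 2 by norm_num), Real.sqrt_nonneg 2]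
    rw [habsΔ, ← hMm_abs]
    have hΔ0 : 0 ≤ s - S := by linarith
    calc Real.sqrt a * (s - S) * b ≤ (Real.sqrt 2 * t) * (s - S) * (4 * t ^ 2) := by
          apply mul_le_mul _ hb4 hb0.le (by positivity)
          exact mul_le_mul_of_nonneg_right hsa hΔ0
      _ = 4 * Real.sqrt 2 * (t * ((s - S) * t ^ 2)) := by ring
      _ ≤ 4 * Real.sqrt 2 * (t * (C * s * (M - m))) := by
          have h1 : (s - S) * t ^ 2 ≤ C * s * (M - m) := by rw [ht2]; exact hΔm
          apply mul_le_mul_of_nonneg_left _ (by positivity)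
          exact mul_le_mul_of_nonneg_left h1 ht0.le
      _ = 4 * Real.sqrt 2 * C * ((s * t) * (M - m)) := by ring
      _ ≤ 4 * Real.sqrt 2 * C * (Real.sqrt (3 * C) * (M - m)) := by
          apply mul_le_mul_of_nonneg_left _ (by positivity)
          exact mul_le_mul_of_nonneg_right hst (by linarith)
      _ ≤ K * (M - m) := by
          have hMm0 : (0:ℝ) ≤ M - m := by linarith
          nlinarith [Real.sqrt_nonneg (2 * C),
            mul_nonneg (mul_nonneg hC.le (Real.sqrt_nonneg (3 * C))) hMm0]

theorem stmt5 (n : ℕ) (C : ℝ) (hC : 0 < C) :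
    ∃ C' : ℝ≥0∞, C' ≠ ⊤ ∧ ∀ γ : ℝ → ℝ,
      (∀ r > 0, 0 ≤ γ r) →
      (∀ r > 0, DifferentiableAt ℝ γ r) →
      (∀ r > 0, γ r ≤ C * (r⁻¹ + (r ^ 2)⁻¹)) →
      (∀ r > 0, deriv γ r ≤ 0) →
      (∀ r > 0, r * |deriv γ r| ≤ C * γ r) →
      ∀ (bhat ghat : EuclideanSpace ℝ (Fin n) → ℂ), Measurable bhat → Measurable ghat →
      ∀ (j : Fin n) (Khat : EuclideanSpace ℝ (Fin n) → ℂ),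
        (∀ ξ, Khat ξ = ((‖ξ‖ ^ ((1:ℝ)/2) : ℝ) : ℂ) *
            ∫ η, ((Real.sqrt (γ ‖ξ‖) - Real.sqrt (γ ‖η‖) : ℝ) : ℂ) *
              bhat (ξ - η) * (Complex.I * ((η j : ℝ) : ℂ)) * ghat η) →
        (∫⁻ ξ in {ξ : EuclideanSpace ℝ (Fin n) | 1 ≤ ‖ξ‖}, (‖Khat ξ‖₊ : ℝ≥0∞) ^ 2) ^ (1/2 : ℝ) ≤
          C' * (∫⁻ ξ, ENNReal.ofReal (1 + ‖ξ‖) * (‖bhat ξ‖₊ : ℝ≥0∞)) *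
            (∫⁻ ξ, (‖ghat ξ‖₊ : ℝ≥0∞) ^ 2) ^ (1/2 : ℝ) := by
  classical
  obtain ⟨K, hKdef⟩ : ∃ K : ℝ, K = 4 * Real.sqrt (2 * C) + 6 * C * Real.sqrt (3 * C) := ⟨_, rfl⟩
  have hKnn : 0 ≤ K := by rw [hKdef]; positivity
  refine ⟨ENNReal.ofReal K, ENNReal.ofReal_ne_top, ?_⟩
  intro γ hpos hdiff hbd hder hmul bhat ghat hbm hgm j Khat hKhat
  set F : EuclideanSpace ℝ (Fin n) → ℝ≥0∞ :=
    fun ζ => ENNReal.ofReal (1 + ‖ζ‖) * (‖bhat ζ‖₊ : ℝ≥0∞) with hF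
  set G : EuclideanSpace ℝ (Fin n) → ℝ≥0∞ := fun η => (‖ghat η‖₊ : ℝ≥0∞) with hG
  have hFm : Measurable F :=
    ((measurable_const.add measurable_norm).ennreal_ofReal).mul hbm.enorm
  have hGm : Measurable G := hgm.enorm
  -- coordinate bound
  have hcoord : ∀ (η : EuclideanSpace ℝ (Fin n)), |η j| ≤ ‖η‖ := by
    intro η
    rw [EuclideanSpace.norm_eq, ← Real.sqrt_sq_eq_abs]
    apply Real.sqrt_le_sqrt
    have : |η j| ^ 2 ≤ ∑ i, ‖η i‖ ^ 2 := by
      have := Finset.single_le_sum (f := fun i => ‖η i‖ ^ 2)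
        (fun i _ => sq_nonneg ‖η i‖) (Finset.mem_univ j)
      simpa [Real.norm_eq_abs, sq_abs] using this
    simpa [sq_abs] using this
  -- pointwise bound on the kernel
  have key1 : ∀ ξ : EuclideanSpace ℝ (Fin n), 1 ≤ ‖ξ‖ →
      (‖Khat ξ‖₊ : ℝ≥0∞) ≤ ENNReal.ofReal K * ∫⁻ η, F (ξ - η) * G η := by
    intro ξ hξ
    have hconv : Khat ξ = ∫ η, (((‖ξ‖ ^ ((1:ℝ)/2) : ℝ) : ℂ) *
        (((Real.sqrt (γ ‖ξ‖) - Real.sqrt (γ ‖η‖) : ℝ) : ℂ) * bhat (ξ - η) *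
          (Complex.I * ((η j : ℝ) : ℂ)) * ghat η)) := by
      rw [hKhat ξ, integral_const_mul]
    rw [hconv]
    refine le_trans (enorm_integral_le_lintegral_enorm _) ?_
    rw [← lintegral_const_mul' (ENNReal.ofReal K) _ ENNReal.ofReal_ne_top]
    apply lintegral_mono
    intro η
    have hnorm : ‖(((‖ξ‖ ^ ((1:ℝ)/2) : ℝ) : ℂ) *
        (((Real.sqrt (γ ‖ξ‖) - Real.sqrt (γ ‖η‖) : ℝ) : ℂ) * bhat (ξ - η) *
          (Complex.I * ((η j : ℝ) : ℂ)) * ghat η))‖ ≤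
        K * ((1 + ‖ξ - η‖) * (‖bhat (ξ - η)‖ * ‖ghat η‖)) := by
      have hrp : (‖ξ‖ : ℝ) ^ ((1:ℝ)/2) = Real.sqrt ‖ξ‖ := (Real.sqrt_eq_rpow _).symm
      have hkey := sqrt_symbol_bound hC hpos hdiff hbd hder hmul hξ (norm_nonneg η)
      rw [← hKdef] at hkey
      have h2 : |‖ξ‖ - ‖η‖| ≤ ‖ξ - η‖ := abs_norm_sub_norm_le ξ η
      have h3 := hcoord η
      have habs : 0 ≤ |Real.sqrt (γ ‖ξ‖) - Real.sqrt (γ ‖η‖)| := abs_nonneg _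
      have hs : 0 ≤ Real.sqrt ‖ξ‖ := Real.sqrt_nonneg _
      have h4 : Real.sqrt ‖ξ‖ * |Real.sqrt (γ ‖ξ‖) - Real.sqrt (γ ‖η‖)| * |η j| ≤
          K * (1 + ‖ξ - η‖) := by
        have h5 : Real.sqrt ‖ξ‖ * |Real.sqrt (γ ‖ξ‖) - Real.sqrt (γ ‖η‖)| * |η j| ≤
            Real.sqrt ‖ξ‖ * |Real.sqrt (γ ‖ξ‖) - Real.sqrt (γ ‖η‖)| * ‖η‖ :=
          mul_le_mul_of_nonneg_left h3 (mul_nonneg hs habs)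
        have h6 : K * |‖ξ‖ - ‖η‖| ≤ K * (1 + ‖ξ - η‖) :=
          mul_le_mul_of_nonneg_left (by linarith [norm_nonneg (ξ - η)]) hKnn
        calc Real.sqrt ‖ξ‖ * |Real.sqrt (γ ‖ξ‖) - Real.sqrt (γ ‖η‖)| * |η j|
            ≤ Real.sqrt ‖ξ‖ * |Real.sqrt (γ ‖ξ‖) - Real.sqrt (γ ‖η‖)| * ‖η‖ := h5
          _ ≤ K * |‖ξ‖ - ‖η‖| := hkey
          _ ≤ K * (1 + ‖ξ - η‖) := h6
      have hz : ‖(((‖ξ‖ ^ ((1:ℝ)/2) : ℝ) : ℂ) *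
          (((Real.sqrt (γ ‖ξ‖) - Real.sqrt (γ ‖η‖) : ℝ) : ℂ) * bhat (ξ - η) *
            (Complex.I * ((η j : ℝ) : ℂ)) * ghat η))‖ =
          Real.sqrt ‖ξ‖ * |Real.sqrt (γ ‖ξ‖) - Real.sqrt (γ ‖η‖)| * |η j| *
            (‖bhat (ξ - η)‖ * ‖ghat η‖) := by
        simp only [norm_mul, Complex.norm_real, Complex.norm_I, Real.norm_eq_abs, one_mul]
        rw [abs_of_nonneg (Real.rpow_nonneg (norm_nonneg ξ) _), hrp]
        ring
      rw [hz]
      have hbg : (0:ℝ) ≤ ‖bhat (ξ - η)‖ * ‖ghat η‖ :=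
        mul_nonneg (norm_nonneg _) (norm_nonneg _)
      calc Real.sqrt ‖ξ‖ * |Real.sqrt (γ ‖ξ‖) - Real.sqrt (γ ‖η‖)| * |η j| *
            (‖bhat (ξ - η)‖ * ‖ghat η‖)
          ≤ K * (1 + ‖ξ - η‖) * (‖bhat (ξ - η)‖ * ‖ghat η‖) :=
            mul_le_mul_of_nonneg_right h4 hbg
        _ = K * ((1 + ‖ξ - η‖) * (‖bhat (ξ - η)‖ * ‖ghat η‖)) := by ring
    have h1p : (0:ℝ) ≤ 1 + ‖ξ - η‖ := by linarith [norm_nonneg (ξ - η)]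
    calc (‖(((‖ξ‖ ^ ((1:ℝ)/2) : ℝ) : ℂ) *
          (((Real.sqrt (γ ‖ξ‖) - Real.sqrt (γ ‖η‖) : ℝ) : ℂ) * bhat (ξ - η) *
            (Complex.I * ((η j : ℝ) : ℂ)) * ghat η))‖₊ : ℝ≥0∞)
        = ENNReal.ofReal ‖(((‖ξ‖ ^ ((1:ℝ)/2) : ℝ) : ℂ) *
          (((Real.sqrt (γ ‖ξ‖) - Real.sqrt (γ ‖η‖) : ℝ) : ℂ) * bhat (ξ - η) *
            (Complex.I * ((η j : ℝ) : ℂ)) * ghat η))‖ := (ofReal_norm _).symm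
      _ ≤ ENNReal.ofReal (K * ((1 + ‖ξ - η‖) * (‖bhat (ξ - η)‖ * ‖ghat η‖))) :=
          ENNReal.ofReal_le_ofReal hnorm
      _ = ENNReal.ofReal K * (ENNReal.ofReal (1 + ‖ξ - η‖) *
            (ENNReal.ofReal ‖bhat (ξ - η)‖ * ENNReal.ofReal ‖ghat η‖)) := by
          rw [ENNReal.ofReal_mul hKnn, ENNReal.ofReal_mul h1p,
            ENNReal.ofReal_mul (norm_nonneg _)]
      _ = ENNReal.ofReal K * (F (ξ - η) * G η) := by
          rw [hF, hG, ofReal_norm, ofReal_norm, enorm_eq_nnnorm, enorm_eq_nnnorm]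
          ring
  -- helpers for rpow arithmetic
  have hsq : ∀ x : ℝ≥0∞, (x ^ (2:ℕ)) ^ ((1:ℝ)/2) = x := by
    intro x
    rw [← ENNReal.rpow_natCast x 2, ← ENNReal.rpow_mul]
    norm_num
  have hhalfsq : ∀ x : ℝ≥0∞, (x ^ ((1:ℝ)/2)) ^ (2:ℝ) = x := by
    intro x
    rw [← ENNReal.rpow_mul]
    norm_num
  have hsq2 : ∀ x : ℝ≥0∞, (x ^ ((1:ℝ)/2)) ^ (2:ℕ) = x := by
    intro x
    rw [← ENNReal.rpow_natCast (x ^ ((1:ℝ)/2)) 2, ← ENNReal.rpow_mul]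
    norm_num
  have hFcomp : ∀ ξ : EuclideanSpace ℝ (Fin n), Measurable fun η => F (ξ - η) :=
    fun ξ => hFm.comp (measurable_const.sub measurable_id)
  have hIBtrans : ∀ ξ : EuclideanSpace ℝ (Fin n), ∫⁻ η, F (ξ - η) = ∫⁻ ζ, F ζ :=
    fun ξ => (Measure.measurePreserving_sub_left volume ξ).lintegral_comp hFm
  -- Cauchy-Schwarz in η
  have key2 : ∀ ξ : EuclideanSpace ℝ (Fin n),
      (∫⁻ η, F (ξ - η) * G η) ^ 2 ≤ (∫⁻ ζ, F ζ) * ∫⁻ η, F (ξ - η) * G η ^ 2 := by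
    intro ξ
    have hconj : Real.HolderConjugate 2 2 := Real.holderConjugate_iff.mpr ⟨one_lt_two, by norm_num⟩
    have hCS := ENNReal.lintegral_mul_le_Lp_mul_Lq volume hconj
      (f := fun η => F (ξ - η) ^ ((1:ℝ)/2))
      (g := fun η => F (ξ - η) ^ ((1:ℝ)/2) * G η)
      ((hFcomp ξ).pow measurable_const).aemeasurable
      (((hFcomp ξ).pow measurable_const).mul hGm).aemeasurable
    simp only [Pi.mul_apply] at hCS
    have e1 : ∀ η, F (ξ - η) ^ ((1:ℝ)/2) * (F (ξ - η) ^ ((1:ℝ)/2) * G η) =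
        F (ξ - η) * G η := by
      intro η
      rw [← mul_assoc, ← sq, ← ENNReal.rpow_natCast (F (ξ - η) ^ ((1:ℝ)/2)) 2,
        ← ENNReal.rpow_mul]
      norm_num
    have e2 : ∀ η, (F (ξ - η) ^ ((1:ℝ)/2)) ^ (2:ℝ) = F (ξ - η) := fun η => hhalfsq _
    have e3 : ∀ η, (F (ξ - η) ^ ((1:ℝ)/2) * G η) ^ (2:ℝ) = F (ξ - η) * G η ^ 2 := by
      intro η
      rw [ENNReal.mul_rpow_of_nonneg _ _ (by norm_num : (0:ℝ) ≤ 2), hhalfsq,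
        show (2:ℝ) = ((2:ℕ):ℝ) by norm_num, ENNReal.rpow_natCast]
    simp only [e1, e2, e3] at hCS
    rw [hIBtrans ξ] at hCS
    calc (∫⁻ η, F (ξ - η) * G η) ^ 2
        ≤ ((∫⁻ ζ, F ζ) ^ ((1:ℝ)/2) * (∫⁻ η, F (ξ - η) * G η ^ 2) ^ ((1:ℝ)/2)) ^ 2 :=
          pow_le_pow_left₀ zero_le hCS 2
      _ = (∫⁻ ζ, F ζ) * ∫⁻ η, F (ξ - η) * G η ^ 2 := by
          rw [mul_pow, hsq2, hsq2]
  -- measurability of the inner convolution-type integral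
  have hinner_meas : Measurable fun ξ : EuclideanSpace ℝ (Fin n) =>
      ∫⁻ η, F (ξ - η) * G η ^ 2 :=
    Measurable.lintegral_prod_right
      ((hFm.comp (measurable_fst.sub measurable_snd)).mul
        ((hGm.comp measurable_snd).pow_const 2))
  -- main integral bound
  have main : (∫⁻ ξ in {ξ : EuclideanSpace ℝ (Fin n) | 1 ≤ ‖ξ‖}, (‖Khat ξ‖₊ : ℝ≥0∞) ^ 2) ≤
      (ENNReal.ofReal K * ∫⁻ ζ, F ζ) ^ 2 * ∫⁻ ζ, G ζ ^ 2 := by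
    have step1 : (∫⁻ ξ in {ξ : EuclideanSpace ℝ (Fin n) | 1 ≤ ‖ξ‖}, (‖Khat ξ‖₊ : ℝ≥0∞) ^ 2) ≤
        ∫⁻ ξ in {ξ : EuclideanSpace ℝ (Fin n) | 1 ≤ ‖ξ‖},
          ENNReal.ofReal K ^ 2 * ((∫⁻ ζ, F ζ) * ∫⁻ η, F (ξ - η) * G η ^ 2) := by
      apply setLIntegral_mono
        ((((hinner_meas.const_mul _).const_mul _)))
      intro ξ hξ
      calc (‖Khat ξ‖₊ : ℝ≥0∞) ^ 2
          ≤ (ENNReal.ofReal K * ∫⁻ η, F (ξ - η) * G η) ^ 2 :=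
            pow_le_pow_left₀ zero_le (key1 ξ hξ) 2
        _ = ENNReal.ofReal K ^ 2 * (∫⁻ η, F (ξ - η) * G η) ^ 2 := mul_pow _ _ 2
        _ ≤ ENNReal.ofReal K ^ 2 * ((∫⁻ ζ, F ζ) * ∫⁻ η, F (ξ - η) * G η ^ 2) :=
            mul_le_mul_right (key2 ξ) _
    have step2 : (∫⁻ ξ in {ξ : EuclideanSpace ℝ (Fin n) | 1 ≤ ‖ξ‖},
          ENNReal.ofReal K ^ 2 * ((∫⁻ ζ, F ζ) * ∫⁻ η, F (ξ - η) * G η ^ 2)) ≤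
        ∫⁻ ξ, ENNReal.ofReal K ^ 2 * ((∫⁻ ζ, F ζ) * ∫⁻ η, F (ξ - η) * G η ^ 2) :=
      setLIntegral_le_lintegral _ _
    have step3 : (∫⁻ ξ, ENNReal.ofReal K ^ 2 * ((∫⁻ ζ, F ζ) * ∫⁻ η, F (ξ - η) * G η ^ 2)) =
        ENNReal.ofReal K ^ 2 * ((∫⁻ ζ, F ζ) * ∫⁻ ξ, ∫⁻ η, F (ξ - η) * G η ^ 2) := by
      rw [lintegral_const_mul _ (hinner_meas.const_mul _),
        lintegral_const_mul _ hinner_meas]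
    have step4 : (∫⁻ ξ, ∫⁻ η, F (ξ - η) * G η ^ 2) = (∫⁻ ζ, F ζ) * ∫⁻ ζ, G ζ ^ 2 := by
      rw [lintegral_lintegral_swap
        ((hFm.comp (measurable_fst.sub measurable_snd)).mul
          ((hGm.comp measurable_snd).pow_const 2)).aemeasurable]
      have e : ∀ η, (∫⁻ ξ, F (ξ - η) * G η ^ 2) = (∫⁻ ζ, F ζ) * G η ^ 2 := by
        intro η
        have hfη : Measurable fun ξ : EuclideanSpace ℝ (Fin n) => F (ξ - η) :=
          hFm.comp (measurable_id.sub measurable_const)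
        have e2 : (∫⁻ ξ : EuclideanSpace ℝ (Fin n), F (ξ - η)) = ∫⁻ ζ, F ζ :=
          (measurePreserving_sub_right volume η).lintegral_comp hFm
        rw [lintegral_mul_const _ hfη, e2]
      simp only [e]
      rw [lintegral_const_mul _ (hGm.pow_const 2)]
    calc (∫⁻ ξ in {ξ : EuclideanSpace ℝ (Fin n) | 1 ≤ ‖ξ‖}, (‖Khat ξ‖₊ : ℝ≥0∞) ^ 2)
        ≤ ∫⁻ ξ, ENNReal.ofReal K ^ 2 * ((∫⁻ ζ, F ζ) * ∫⁻ η, F (ξ - η) * G η ^ 2) :=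
          le_trans step1 step2
      _ = ENNReal.ofReal K ^ 2 * ((∫⁻ ζ, F ζ) * ((∫⁻ ζ, F ζ) * ∫⁻ ζ, G ζ ^ 2)) := by
          rw [step3, step4]
      _ = (ENNReal.ofReal K * ∫⁻ ζ, F ζ) ^ 2 * ∫⁻ ζ, G ζ ^ 2 := by ring
  -- conclude by taking square roots
  calc (∫⁻ ξ in {ξ : EuclideanSpace ℝ (Fin n) | 1 ≤ ‖ξ‖}, (‖Khat ξ‖₊ : ℝ≥0∞) ^ 2) ^ ((1:ℝ)/2)
      ≤ ((ENNReal.ofReal K * ∫⁻ ζ, F ζ) ^ 2 * ∫⁻ ζ, G ζ ^ 2) ^ ((1:ℝ)/2) :=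
        ENNReal.rpow_le_rpow main (by norm_num)
    _ = (ENNReal.ofReal K * ∫⁻ ζ, F ζ) * (∫⁻ ζ, G ζ ^ 2) ^ ((1:ℝ)/2) := by
        rw [ENNReal.mul_rpow_of_nonneg _ _ (by norm_num : (0:ℝ) ≤ 1/2), hsq]
    _ = ENNReal.ofReal K * (∫⁻ ζ, F ζ) * (∫⁻ ζ, G ζ ^ 2) ^ ((1:ℝ)/2) := by
        rw [mul_assoc]
end

section
/- Under the same hypotheses on γ, Γ, Λ, b, g as above, the low-frequency part satisfies ‖Λ^{1/2} P_{<1} Λ^{1/2} [Γ^{1/2}, b] ∇g‖_{L²} ≤ C ‖b‖_{Y¹} ‖g‖_{L²}, where P_{<1} is the Fourier projection onto {|ξ| < 1}. -/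
open MeasureTheory ENNReal

lemma coord_le_norm {n : ℕ} (x : EuclideanSpace ℝ (Fin n)) (j : Fin n) : |x j| ≤ ‖x‖ := by
  rw [EuclideanSpace.norm_eq x,
    show |x j| = Real.sqrt (‖x j‖^2) by rw [Real.sqrt_sq_eq_abs, Real.norm_eq_abs, abs_abs]]
  exact Real.sqrt_le_sqrt
    (Finset.single_le_sum (f := fun i => ‖x i‖^2) (fun i _ => sq_nonneg _) (Finset.mem_univ j))

lemma key_real (C : ℝ) (hC : 0 < C) (γ : ℝ → ℝ)
    (hbound : ∀ r > 0, γ r ≤ C * (r⁻¹ + (r ^ 2)⁻¹)) :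
    ∀ r s t : ℝ, 0 < r → r < 1 → 0 ≤ s → 0 ≤ t → s ≤ t + r →
      r * |Real.sqrt (γ r) - Real.sqrt (γ s)| * s ≤ 5 * Real.sqrt C * (1 + t) := by
  have hCs : 0 ≤ Real.sqrt C := Real.sqrt_nonneg C
  have aux : ∀ u : ℝ, 0 < u → u * Real.sqrt (γ u) ≤ Real.sqrt C * (1 + u) := by
    intro u hu
    have h1 : u * Real.sqrt (γ u) = Real.sqrt (u ^ 2 * γ u) := by
      rw [Real.sqrt_mul (sq_nonneg u), Real.sqrt_sq hu.le]
    rw [h1]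
    have h2 : u ^ 2 * γ u ≤ C * (u + 1) := by
      have h3 : u ^ 2 * γ u ≤ u ^ 2 * (C * (u⁻¹ + (u ^ 2)⁻¹)) :=
        mul_le_mul_of_nonneg_left (hbound u hu) (sq_nonneg u)
      calc u ^ 2 * γ u ≤ u ^ 2 * (C * (u⁻¹ + (u ^ 2)⁻¹)) := h3
        _ = C * (u + 1) := by field_simp
    calc Real.sqrt (u ^ 2 * γ u) ≤ Real.sqrt (C * (u + 1)) := Real.sqrt_le_sqrt h2
      _ = Real.sqrt C * Real.sqrt (u + 1) := Real.sqrt_mul hC.le _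
      _ ≤ Real.sqrt C * (1 + u) := by
          apply mul_le_mul_of_nonneg_left _ hCs
          have h4 : u + 1 ≤ (1 + u) ^ 2 := by nlinarith
          calc Real.sqrt (u + 1) ≤ Real.sqrt ((1 + u) ^ 2) := Real.sqrt_le_sqrt h4
            _ = 1 + u := Real.sqrt_sq (by linarith)
  intro r s t hr hr1 hs ht hst
  have h1t : (0:ℝ) ≤ 1 + t := by linarith
  rcases eq_or_lt_of_le hs with hs0 | hs0
  · rw [← hs0]; simp; positivity
  · have key : r * |Real.sqrt (γ r) - Real.sqrt (γ s)| * s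
        ≤ (r * Real.sqrt (γ r)) * s + r * (s * Real.sqrt (γ s)) := by
      nlinarith [abs_nonneg (Real.sqrt (γ r) - Real.sqrt (γ s)), Real.sqrt_nonneg (γ r),
        Real.sqrt_nonneg (γ s), abs_sub_abs_le_abs_sub (Real.sqrt (γ r)) (Real.sqrt (γ s)),
        abs_sub (Real.sqrt (γ r)) (Real.sqrt (γ s)),
        abs_of_nonneg (Real.sqrt_nonneg (γ r)), abs_of_nonneg (Real.sqrt_nonneg (γ s)),
        mul_pos hr hs0]
    have h1 : r * Real.sqrt (γ r) ≤ Real.sqrt C * (1 + r) := aux r hr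
    have h2 : s * Real.sqrt (γ s) ≤ Real.sqrt C * (1 + s) := aux s hs0
    have e1 : (r * Real.sqrt (γ r)) * s ≤ (Real.sqrt C * 2) * (t + 1) := by
      have h5 : r * Real.sqrt (γ r) ≤ Real.sqrt C * 2 := by nlinarith
      nlinarith [mul_nonneg hr.le (Real.sqrt_nonneg (γ r))]
    have e2 : r * (s * Real.sqrt (γ s)) ≤ Real.sqrt C * (2 + t) := by
      have hss : s * Real.sqrt (γ s) ≤ Real.sqrt C * (2 + t) := by nlinarith
      nlinarith [mul_nonneg hs0.le (Real.sqrt_nonneg (γ s))]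
    nlinarith

/- STATEMENT 6 -/
theorem stmt6 (n : ℕ) (C : ℝ) (hC : 0 < C) :
    ∃ C' : ℝ≥0∞, C' ≠ ⊤ ∧ ∀ γ : ℝ → ℝ,
      (∀ r > 0, 0 ≤ γ r) →
      (∀ r > 0, DifferentiableAt ℝ γ r) →
      (∀ r > 0, γ r ≤ C * (r⁻¹ + (r ^ 2)⁻¹)) →
      (∀ r > 0, deriv γ r ≤ 0) →
      (∀ r > 0, r * |deriv γ r| ≤ C * γ r) →
      ∀ (bhat ghat : EuclideanSpace ℝ (Fin n) → ℂ), Measurable bhat → Measurable ghat →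
      ∀ (j : Fin n) (Khat : EuclideanSpace ℝ (Fin n) → ℂ),
        (∀ ξ, Khat ξ = ((‖ξ‖ ^ ((1:ℝ)/2) : ℝ) : ℂ) *
            ∫ η, ((Real.sqrt (γ ‖ξ‖) - Real.sqrt (γ ‖η‖) : ℝ) : ℂ) *
              bhat (ξ - η) * (Complex.I * ((η j : ℝ) : ℂ)) * ghat η) →
        (∫⁻ ξ in {ξ : EuclideanSpace ℝ (Fin n) | ‖ξ‖ < 1},
            ENNReal.ofReal ‖ξ‖ * (‖Khat ξ‖₊ : ℝ≥0∞) ^ 2) ^ (1/2 : ℝ) ≤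
          C' * (∫⁻ ξ, ENNReal.ofReal (1 + ‖ξ‖) * (‖bhat ξ‖₊ : ℝ≥0∞)) *
            (∫⁻ ξ, (‖ghat ξ‖₊ : ℝ≥0∞) ^ 2) ^ (1/2 : ℝ) := by
  refine ⟨ENNReal.ofReal (5 * Real.sqrt C), ENNReal.ofReal_ne_top, ?_⟩
  intro γ hpos hdiff hbound hder1 hder2 bhat ghat hb hg j Khat hKhat
  set M : ℝ≥0∞ := ENNReal.ofReal (5 * Real.sqrt C) with hM
  have hCs : 0 < Real.sqrt C := Real.sqrt_pos.mpr hC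
  have hM0 : M ≠ 0 := by
    simp only [hM, ne_eq, ENNReal.ofReal_eq_zero, not_le]; positivity
  have hMtop : M ≠ ⊤ := ENNReal.ofReal_ne_top
  set F : EuclideanSpace ℝ (Fin n) → ℝ≥0∞ := fun ζ => ENNReal.ofReal (1 + ‖ζ‖) * (‖bhat ζ‖₊ : ℝ≥0∞) with hFdef
  set G : EuclideanSpace ℝ (Fin n) → ℝ≥0∞ := fun η => (‖ghat η‖₊ : ℝ≥0∞) with hGdef
  have hFm : Measurable F :=
    ((measurable_const.add measurable_norm).ennreal_ofReal).mul hb.nnnorm.coe_nnreal_ennreal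
  have hGm : Measurable G := hg.nnnorm.coe_nnreal_ennreal
  set B : ℝ≥0∞ := ∫⁻ ξ, F ξ with hBdef
  set Gsq : ℝ≥0∞ := ∫⁻ ξ, G ξ ^ 2 with hGsqdef
  -- degenerate case: ghat vanishes a.e.
  by_cases hGsq0 : Gsq = 0
  · have hgz : ghat =ᵐ[(volume : Measure (EuclideanSpace ℝ (Fin n)))] 0 := by
      have h0 : (fun ξ => G ξ ^ 2) =ᵐ[(volume : Measure (EuclideanSpace ℝ (Fin n)))] 0 :=
        (lintegral_eq_zero_iff (hGm.pow_const 2)).mp hGsq0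
      filter_upwards [h0] with ξ hξ
      simp only [Pi.zero_apply, hGdef] at hξ ⊢
      have h2 := pow_eq_zero_iff two_ne_zero |>.mp hξ
      simpa using h2
    have hKz : ∀ ξ, Khat ξ = 0 := by
      intro ξ
      rw [hKhat ξ]
      have hz : (fun η => ((Real.sqrt (γ ‖ξ‖) - Real.sqrt (γ ‖η‖) : ℝ) : ℂ) *
          bhat (ξ - η) * (Complex.I * ((η j : ℝ) : ℂ)) * ghat η) =ᵐ[(volume : Measure (EuclideanSpace ℝ (Fin n)))] 0 := by
        filter_upwards [hgz] with η hη
        simp [hη]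
      rw [integral_eq_zero_of_ae hz, mul_zero]
    have : (∫⁻ ξ in {ξ : EuclideanSpace ℝ (Fin n) | ‖ξ‖ < 1},
        ENNReal.ofReal ‖ξ‖ * (‖Khat ξ‖₊ : ℝ≥0∞) ^ 2) = 0 := by
      have : ∀ ξ, ENNReal.ofReal ‖ξ‖ * (‖Khat ξ‖₊ : ℝ≥0∞) ^ 2 = 0 := by
        intro ξ; simp [hKz ξ]
      simp only [this, lintegral_zero]
    rw [this, ENNReal.zero_rpow_of_pos (by norm_num)]
    exact zero_le
  -- degenerate case: B = ⊤
  by_cases hBtop : B = ⊤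
  · rw [hBtop]
    have h1 : Gsq ^ (1/2 : ℝ) ≠ 0 := by
      simp only [ne_eq, ENNReal.rpow_eq_zero_iff, not_or]
      constructor
      · rintro ⟨h, -⟩; exact hGsq0 h
      · rintro ⟨-, h⟩; norm_num at h
    rw [ENNReal.mul_top hM0, ENNReal.top_mul h1]
    exact le_top
  -- main case
  have htwo : ∀ x : ℝ≥0∞, x ^ (2 : ℕ) = x ^ ((2 : ℝ)) := fun x => by
    rw [← ENNReal.rpow_natCast x 2]; norm_num
  -- pointwise bound
  have main_pt : ∀ ξ : EuclideanSpace ℝ (Fin n), ‖ξ‖ < 1 →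
      ENNReal.ofReal ‖ξ‖ * (‖Khat ξ‖₊ : ℝ≥0∞) ^ 2 ≤ (M * ∫⁻ η, F (ξ - η) * G η) ^ 2 := by
    intro ξ hξ1
    rcases eq_or_lt_of_le (norm_nonneg ξ) with h0 | h0
    · rw [← h0]; simp
    set a : ℝ≥0∞ := ENNReal.ofReal (Real.sqrt ‖ξ‖) with hadef
    set L : ℝ≥0∞ := ∫⁻ η, (‖(((Real.sqrt (γ ‖ξ‖) - Real.sqrt (γ ‖η‖) : ℝ) : ℂ) *
        bhat (ξ - η) * (Complex.I * ((η j : ℝ) : ℂ)) * ghat η)‖₊ : ℝ≥0∞) with hLdef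
    have hKle : (‖Khat ξ‖₊ : ℝ≥0∞) ≤ a * L := by
      rw [hKhat ξ, nnnorm_mul, ENNReal.coe_mul]
      have h1 : (‖((‖ξ‖ ^ ((1:ℝ)/2) : ℝ) : ℂ)‖₊ : ℝ≥0∞) = a := by
        rw [Complex.nnnorm_real, ← enorm_eq_nnnorm, Real.enorm_eq_ofReal (Real.rpow_nonneg (norm_nonneg ξ) _),
          hadef, Real.sqrt_eq_rpow]
      rw [h1]
      exact mul_le_mul_right (enorm_integral_le_lintegral_enorm _) a
    have haa : a * a = ENNReal.ofReal ‖ξ‖ := by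
      rw [hadef, ← ENNReal.ofReal_mul (Real.sqrt_nonneg _), Real.mul_self_sqrt (norm_nonneg ξ)]
    have step1 : ENNReal.ofReal ‖ξ‖ * (‖Khat ξ‖₊ : ℝ≥0∞) ^ 2
        ≤ (ENNReal.ofReal ‖ξ‖ * L) ^ 2 := by
      calc ENNReal.ofReal ‖ξ‖ * (‖Khat ξ‖₊ : ℝ≥0∞) ^ 2
          ≤ ENNReal.ofReal ‖ξ‖ * (a * L) ^ 2 := by gcongr
        _ = (a * a) * (a * L) ^ 2 := by rw [haa]
        _ = (a * a * L) ^ 2 := by ring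
        _ = (ENNReal.ofReal ‖ξ‖ * L) ^ 2 := by rw [haa]
    have step2 : ENNReal.ofReal ‖ξ‖ * L ≤ M * ∫⁻ η, F (ξ - η) * G η := by
      rw [hLdef, ← lintegral_const_mul' _ _ ENNReal.ofReal_ne_top,
        ← lintegral_const_mul' M _ hMtop]
      apply lintegral_mono
      intro η
      dsimp only
      -- compute the nnnorm
      have hnn : (‖(((Real.sqrt (γ ‖ξ‖) - Real.sqrt (γ ‖η‖) : ℝ) : ℂ) *
          bhat (ξ - η) * (Complex.I * ((η j : ℝ) : ℂ)) * ghat η)‖₊ : ℝ≥0∞)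
          = ENNReal.ofReal |Real.sqrt (γ ‖ξ‖) - Real.sqrt (γ ‖η‖)|
            * (‖bhat (ξ - η)‖₊ : ℝ≥0∞) * ENNReal.ofReal |η j| * (‖ghat η‖₊ : ℝ≥0∞) := by
        simp only [nnnorm_mul, Complex.nnnorm_real, Complex.nnnorm_I, one_mul,
          ENNReal.coe_mul]
        simp only [← enorm_eq_nnnorm, Real.enorm_eq_ofReal_abs]
      rw [hnn]
      have hreal : ‖ξ‖ * |Real.sqrt (γ ‖ξ‖) - Real.sqrt (γ ‖η‖)| * |η j|
          ≤ 5 * Real.sqrt C * (1 + ‖ξ - η‖) := by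
        have hst : ‖η‖ ≤ ‖ξ - η‖ + ‖ξ‖ := by
          have h7 := norm_sub_le ξ (ξ - η)
          rw [show ξ - (ξ - η) = η by abel] at h7
          linarith
        calc ‖ξ‖ * |Real.sqrt (γ ‖ξ‖) - Real.sqrt (γ ‖η‖)| * |η j|
            ≤ ‖ξ‖ * |Real.sqrt (γ ‖ξ‖) - Real.sqrt (γ ‖η‖)| * ‖η‖ := by
              apply mul_le_mul_of_nonneg_left (coord_le_norm η j)
              positivity
          _ ≤ 5 * Real.sqrt C * (1 + ‖ξ - η‖) :=
              key_real C hC γ hbound ‖ξ‖ ‖η‖ ‖ξ - η‖ h0 hξ1 (norm_nonneg _) (norm_nonneg _) hst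
      calc ENNReal.ofReal ‖ξ‖ * (ENNReal.ofReal |Real.sqrt (γ ‖ξ‖) - Real.sqrt (γ ‖η‖)|
            * (‖bhat (ξ - η)‖₊ : ℝ≥0∞) * ENNReal.ofReal |η j| * (‖ghat η‖₊ : ℝ≥0∞))
          = ENNReal.ofReal (‖ξ‖ * |Real.sqrt (γ ‖ξ‖) - Real.sqrt (γ ‖η‖)| * |η j|)
            * ((‖bhat (ξ - η)‖₊ : ℝ≥0∞) * (‖ghat η‖₊ : ℝ≥0∞)) := by
            rw [ENNReal.ofReal_mul (by positivity), ENNReal.ofReal_mul (norm_nonneg ξ)]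
            ring
        _ ≤ ENNReal.ofReal (5 * Real.sqrt C * (1 + ‖ξ - η‖))
            * ((‖bhat (ξ - η)‖₊ : ℝ≥0∞) * (‖ghat η‖₊ : ℝ≥0∞)) := by
            exact mul_le_mul_left (ENNReal.ofReal_le_ofReal hreal) _
        _ = M * (F (ξ - η) * G η) := by
            rw [ENNReal.ofReal_mul (by positivity), hFdef, hGdef, hM]
            ring
    calc ENNReal.ofReal ‖ξ‖ * (‖Khat ξ‖₊ : ℝ≥0∞) ^ 2 ≤ (ENNReal.ofReal ‖ξ‖ * L) ^ 2 := step1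
      _ ≤ (M * ∫⁻ η, F (ξ - η) * G η) ^ 2 := by gcongr
  -- Young's inequality step
  have hinv : ∀ ξ : EuclideanSpace ℝ (Fin n), ∫⁻ η, F (ξ - η) = B :=
    fun ξ => (Measure.measurePreserving_sub_left volume ξ).lintegral_comp hFm
  have hinv' : ∀ η : EuclideanSpace ℝ (Fin n), ∫⁻ ξ, F (ξ - η) = B :=
    fun η => (measurePreserving_sub_right volume η).lintegral_comp hFm
  have hyoung : ∫⁻ ξ, (∫⁻ η, F (ξ - η) * G η) ^ (2:ℕ) ≤ B ^ 2 * Gsq := by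
    have hCS : ∀ ξ : EuclideanSpace ℝ (Fin n), (∫⁻ η, F (ξ - η) * G η)
        ≤ B ^ (1/2 : ℝ) * (∫⁻ η, F (ξ - η) * G η ^ 2) ^ (1/2 : ℝ) := by
      intro ξ
      have hFξ : Measurable fun η : EuclideanSpace ℝ (Fin n) => F (ξ - η) := hFm.comp (measurable_const.sub measurable_id)
      have hconj : Real.HolderConjugate 2 2 := Real.holderConjugate_iff.mpr ⟨one_lt_two, by norm_num⟩
      have h := ENNReal.lintegral_mul_le_Lp_mul_Lq (volume : Measure (EuclideanSpace ℝ (Fin n))) hconj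
        (f := fun η => (F (ξ - η)) ^ (1/2 : ℝ))
        (g := fun η => (F (ξ - η)) ^ (1/2 : ℝ) * G η)
        ((hFξ.pow_const _).aemeasurable)
        (((hFξ.pow_const _).mul hGm).aemeasurable)
      have e1 : ∀ η : EuclideanSpace ℝ (Fin n), ((fun η => (F (ξ - η)) ^ (1/2 : ℝ)) *
          fun η => (F (ξ - η)) ^ (1/2 : ℝ) * G η) η = F (ξ - η) * G η := by
        intro η
        simp only [Pi.mul_apply]
        rw [← mul_assoc, ← ENNReal.rpow_add_of_nonneg _ _ (by norm_num) (by norm_num)]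
        norm_num
      have e2 : ∀ η : EuclideanSpace ℝ (Fin n), ((F (ξ - η)) ^ (1/2 : ℝ)) ^ (2:ℝ) = F (ξ - η) := by
        intro η
        rw [← ENNReal.rpow_mul]
        norm_num
      have e3 : ∀ η : EuclideanSpace ℝ (Fin n), ((F (ξ - η)) ^ (1/2 : ℝ) * G η) ^ (2:ℝ) = F (ξ - η) * G η ^ 2 := by
        intro η
        rw [ENNReal.mul_rpow_of_nonneg _ _ (by norm_num), ← ENNReal.rpow_mul, htwo (G η)]
        norm_num
      simp only [e1, e2, e3] at h
      calc (∫⁻ η, F (ξ - η) * G η) ≤ (∫⁻ η, F (ξ - η)) ^ (1/2 : ℝ)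
            * (∫⁻ η, F (ξ - η) * G η ^ 2) ^ (1/2 : ℝ) := h
        _ = B ^ (1/2 : ℝ) * (∫⁻ η, F (ξ - η) * G η ^ 2) ^ (1/2 : ℝ) := by rw [hinv ξ]
    have hsq : ∀ ξ : EuclideanSpace ℝ (Fin n), (∫⁻ η, F (ξ - η) * G η) ^ (2:ℕ)
        ≤ B * ∫⁻ η, F (ξ - η) * G η ^ 2 := by
      intro ξ
      calc (∫⁻ η, F (ξ - η) * G η) ^ (2:ℕ)
          ≤ (B ^ (1/2 : ℝ) * (∫⁻ η, F (ξ - η) * G η ^ 2) ^ (1/2 : ℝ)) ^ (2:ℕ) := by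
            gcongr; exact hCS ξ
        _ = B * ∫⁻ η, F (ξ - η) * G η ^ 2 := by
            rw [htwo, ENNReal.mul_rpow_of_nonneg _ _ (by norm_num),
              ← ENNReal.rpow_mul, ← ENNReal.rpow_mul]
            norm_num
    calc ∫⁻ ξ, (∫⁻ η, F (ξ - η) * G η) ^ (2:ℕ)
        ≤ ∫⁻ ξ, B * ∫⁻ η, F (ξ - η) * G η ^ 2 := lintegral_mono hsq
      _ = B * ∫⁻ ξ, ∫⁻ η, F (ξ - η) * G η ^ 2 := lintegral_const_mul' _ _ hBtop
      _ = B * ∫⁻ η, ∫⁻ ξ, F (ξ - η) * G η ^ 2 := by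
          rw [lintegral_lintegral_swap]
          exact ((hFm.comp (measurable_fst.sub measurable_snd)).mul
            ((hGm.comp measurable_snd).pow_const 2)).aemeasurable
      _ = B * ∫⁻ η, (∫⁻ ξ, F (ξ - η)) * G η ^ 2 := by
          congr 1
          apply lintegral_congr
          intro η
          rw [lintegral_mul_const' _ _ (ENNReal.pow_ne_top ENNReal.coe_ne_top)]
      _ = B * ∫⁻ η, B * G η ^ 2 := by
          congr 1; apply lintegral_congr; intro η; rw [hinv' η]
      _ = B * (B * Gsq) := by rw [lintegral_const_mul' _ _ hBtop]
      _ = B ^ 2 * Gsq := by ring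
  -- combine
  have hSmeas : MeasurableSet {ξ : EuclideanSpace ℝ (Fin n) | ‖ξ‖ < 1} :=
    measurableSet_lt (measurable_norm) measurable_const
  calc (∫⁻ ξ in {ξ : EuclideanSpace ℝ (Fin n) | ‖ξ‖ < 1}, ENNReal.ofReal ‖ξ‖ * (‖Khat ξ‖₊ : ℝ≥0∞) ^ 2) ^ (1/2 : ℝ)
      ≤ (∫⁻ ξ, (M * ∫⁻ η, F (ξ - η) * G η) ^ (2:ℕ)) ^ (1/2 : ℝ) := by
        apply ENNReal.rpow_le_rpow _ (by norm_num)
        calc ∫⁻ ξ in {ξ : EuclideanSpace ℝ (Fin n) | ‖ξ‖ < 1}, ENNReal.ofReal ‖ξ‖ * (‖Khat ξ‖₊ : ℝ≥0∞) ^ 2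
            ≤ ∫⁻ ξ in {ξ : EuclideanSpace ℝ (Fin n) | ‖ξ‖ < 1}, (M * ∫⁻ η, F (ξ - η) * G η) ^ (2:ℕ) :=
              setLIntegral_mono' hSmeas (fun ξ hξ => main_pt ξ hξ)
          _ ≤ ∫⁻ ξ, (M * ∫⁻ η, F (ξ - η) * G η) ^ (2:ℕ) := setLIntegral_le_lintegral _ _
    _ ≤ (M ^ 2 * (B ^ 2 * Gsq)) ^ (1/2 : ℝ) := by
        apply ENNReal.rpow_le_rpow _ (by norm_num)
        calc ∫⁻ ξ, (M * ∫⁻ η, F (ξ - η) * G η) ^ (2:ℕ)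
            = M ^ 2 * ∫⁻ ξ, (∫⁻ η, F (ξ - η) * G η) ^ (2:ℕ) := by
              simp_rw [mul_pow]
              exact lintegral_const_mul' _ _ (ENNReal.pow_ne_top hMtop)
          _ ≤ M ^ 2 * (B ^ 2 * Gsq) := mul_le_mul_right hyoung _
    _ = M * B * Gsq ^ (1/2 : ℝ) := by
        rw [ENNReal.mul_rpow_of_nonneg _ _ (by norm_num),
          ENNReal.mul_rpow_of_nonneg _ _ (by norm_num),
          htwo M, htwo B, ← ENNReal.rpow_mul, ← ENNReal.rpow_mul]
        norm_num [mul_assoc]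
end

section
/- Let 0 ≤ a ≤ 2. For g ∈ L²(ℝⁿ) and b with ‖b‖_{Ẏ¹} := ∫_{ℝⁿ} |ξ||b̂(ξ)| dξ < ∞, the commutator satisfies ‖Λ^{a/2} [Λ^{−a/2}, b] ∇g‖_{L²} ≤ C ‖b‖_{Ẏ¹} ‖g‖_{L²}. -/
open MeasureTheory ENNReal

lemma key_real_s7 {s : ℝ} (hs0 : 0 ≤ s) (hs1 : s ≤ 1) {x y : ℝ} (hx : 0 ≤ x) (hy : 0 ≤ y) :
    x ^ s * |x ^ (-s) - y ^ (-s)| * y ≤ 2 * |x - y| := by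
  rcases eq_or_lt_of_le hs0 with rfl | hs
  · simp
  rcases eq_or_lt_of_le hy with rfl | hy'
  · simp
  rcases eq_or_lt_of_le hx with rfl | hx'
  · rw [Real.zero_rpow hs.ne', zero_mul, zero_mul]
    positivity
  have bern : ∀ u v : ℝ, 0 < u → 0 < v → u ^ s ≤ v ^ s + s * v ^ s * (u - v) / v := by
    intro u v hu hv
    have h1 : u ^ s = v ^ s * (1 + (u / v - 1)) ^ s := by
      rw [show (1 + (u / v - 1)) = u / v by ring, ← Real.mul_rpow hv.le (by positivity),
        mul_div_cancel₀ _ hv.ne']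
    have h2 : (1 + (u / v - 1)) ^ s ≤ 1 + s * (u / v - 1) :=
      rpow_one_add_le_one_add_mul_self (by nlinarith [div_nonneg hu.le hv.le]) hs0 hs1
    calc u ^ s = v ^ s * (1 + (u / v - 1)) ^ s := h1
      _ ≤ v ^ s * (1 + s * (u / v - 1)) := by
          exact mul_le_mul_of_nonneg_left h2 (Real.rpow_nonneg hv.le s)
      _ = v ^ s + s * v ^ s * (u - v) / v := by field_simp
  set A := x ^ s with hA
  set B := y ^ s with hB
  have hApos : 0 < A := Real.rpow_pos_of_pos hx' s
  have hBpos : 0 < B := Real.rpow_pos_of_pos hy' s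
  have hLHS : x ^ s * |x ^ (-s) - y ^ (-s)| * y = |B - A| * y / B := by
    rw [Real.rpow_neg hx, Real.rpow_neg hy, ← hA, ← hB,
      show A⁻¹ - B⁻¹ = (B - A) / (A * B) by field_simp,
      abs_div, abs_of_pos (mul_pos hApos hBpos)]
    field_simp
  rw [hLHS, div_le_iff₀ hBpos]
  rcases le_or_gt y x with hxy | hxy
  · have hAB : B ≤ A := Real.rpow_le_rpow hy hxy hs0
    rw [abs_of_nonpos (sub_nonpos.2 hAB), abs_of_nonneg (sub_nonneg.2 hxy)]
    have hb := bern x y hx' hy'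
    rw [← hA, ← hB] at hb
    have hb' : (A - B) * y ≤ s * B * (x - y) := (le_div_iff₀ hy').mp (sub_le_iff_le_add'.mpr hb)
    nlinarith [mul_nonneg (mul_nonneg (sub_nonneg.2 hs1) hBpos.le) (sub_nonneg.2 hxy)]
  · have hAB : A ≤ B := Real.rpow_le_rpow hx hxy.le hs0
    rw [abs_of_nonneg (sub_nonneg.2 hAB), abs_of_neg (sub_neg.2 hxy)]
    rcases le_or_gt (2 * x) y with h2 | h2
    · nlinarith [mul_nonneg hApos.le hy'.le, mul_nonneg hBpos.le (sub_nonneg.2 hxy.le)]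
    · have hb := bern y x hy' hx'
      rw [← hA, ← hB] at hb
      have hb' : (B - A) * x ≤ s * A * (y - x) := (le_div_iff₀ hx').mp (sub_le_iff_le_add'.mpr hb)
      nlinarith [mul_nonneg (mul_nonneg (sub_nonneg.2 hs1) hApos.le) (sub_nonneg.2 hxy.le),
        mul_nonneg (sub_nonneg.2 hAB) (sub_nonneg.2 (by linarith : y ≤ 2 * x)),
        mul_nonneg (sub_nonneg.2 hAB) (sub_nonneg.2 hxy.le), hApos.le]

/- STATEMENT 7: sharp commutator bound ‖Λ^{a/2}[Λ^{−a/2},b]∇g‖_{L²} ≤ C‖b‖_{Ẏ¹}‖g‖_{L²}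
for 0 ≤ a ≤ 2, on the Fourier side (j-th component of ∇g): the Fourier transform of
Λ^{a/2}[Λ^{−a/2},b]∂_j g is Fhat ξ = ∫ |ξ|^{a/2}(|ξ|^{−a/2} − |η|^{−a/2}) b̂(ξ−η)(iη_j)ĝ(η)dη,
and ‖·‖_{L²} = (∫|·̂|²)^{1/2} by Plancherel; ‖b‖_{Ẏ¹} = ∫|ξ||b̂(ξ)|dξ. -/
theorem stmt7 (n : ℕ) (a : ℝ) (ha0 : 0 ≤ a) (ha2 : a ≤ 2) :
    ∃ C : ℝ≥0∞, C ≠ ⊤ ∧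
      ∀ (bhat ghat : EuclideanSpace ℝ (Fin n) → ℂ), Measurable bhat → Measurable ghat →
      ∀ (j : Fin n) (Fhat : EuclideanSpace ℝ (Fin n) → ℂ),
        (∀ ξ, Fhat ξ = ∫ η,
            ((‖ξ‖ ^ (a/2) * (‖ξ‖ ^ (-(a/2)) - ‖η‖ ^ (-(a/2))) : ℝ) : ℂ) *
              bhat (ξ - η) * (Complex.I * ((η j : ℝ) : ℂ)) * ghat η) →
        (∫⁻ ξ, (‖Fhat ξ‖₊ : ℝ≥0∞) ^ 2) ^ (1/2 : ℝ) ≤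
          C * (∫⁻ ξ, ENNReal.ofReal ‖ξ‖ * (‖bhat ξ‖₊ : ℝ≥0∞)) *
            (∫⁻ ξ, (‖ghat ξ‖₊ : ℝ≥0∞) ^ 2) ^ (1/2 : ℝ) := by
  refine ⟨2, by norm_num, ?_⟩
  intro bhat ghat hbm hgm j Fhat hFhat
  have hs0 : 0 ≤ a / 2 := by linarith
  have hs1 : a / 2 ≤ 1 := by linarith
  set F : EuclideanSpace ℝ (Fin n) → ℝ≥0∞ :=
    fun ζ => ENNReal.ofReal ‖ζ‖ * (‖bhat ζ‖₊ : ℝ≥0∞) with hF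
  set G : EuclideanSpace ℝ (Fin n) → ℝ≥0∞ := fun η => (‖ghat η‖₊ : ℝ≥0∞) with hG
  have hFmeas : Measurable F := (measurable_norm.ennreal_ofReal).mul hbm.nnnorm.coe_nnreal_ennreal
  have hGmeas : Measurable G := hgm.nnnorm.coe_nnreal_ennreal
  set I1 : ℝ≥0∞ := ∫⁻ ζ, F ζ with hI1
  set I2 : ℝ≥0∞ := ∫⁻ η, G η ^ 2 with hI2
  have hrp : ∀ x : ℝ≥0∞, x ^ (2 : ℝ) = x ^ (2 : ℕ) := fun x => by
    rw [← ENNReal.rpow_natCast]; norm_num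
  -- translation invariance (with reflection)
  have hneg : (∫⁻ x, F (-x)) = I1 := by
    rw [← lintegral_map hFmeas measurable_neg, Measure.map_neg_eq_self]
  have htrans : ∀ ξ : EuclideanSpace ℝ (Fin n), ∫⁻ η, F (ξ - η) = I1 := by
    intro ξ
    have e : ∀ η : EuclideanSpace ℝ (Fin n), F (ξ - η) = (fun x => F (-x)) (η - ξ) := by
      intro η; simp [neg_sub]
    simp_rw [e]
    rw [lintegral_sub_right_eq_self (fun x => F (-x)) ξ, hneg]
  -- pointwise bound on the Fourier transform
  have hpt : ∀ ξ : EuclideanSpace ℝ (Fin n),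
      (‖Fhat ξ‖₊ : ℝ≥0∞) ≤ ∫⁻ η, 2 * F (ξ - η) * G η := by
    intro ξ
    rw [hFhat ξ]
    refine le_trans (enorm_integral_le_lintegral_enorm _) (lintegral_mono fun η => ?_)
    have hcoord : |η j| ≤ ‖η‖ := by
      have h1 : ‖η j‖ ^ 2 ≤ ∑ i, ‖η i‖ ^ 2 :=
        Finset.single_le_sum (fun i _ => sq_nonneg ‖η i‖) (Finset.mem_univ j)
      have h2 := Real.sqrt_le_sqrt h1
      rw [Real.sqrt_sq (norm_nonneg _)] at h2
      rw [EuclideanSpace.norm_eq]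
      exact le_trans (le_of_eq (Real.norm_eq_abs _).symm) h2
    have hkey : |‖ξ‖ ^ (a/2) * (‖ξ‖ ^ (-(a/2)) - ‖η‖ ^ (-(a/2)))| * |η j| ≤ 2 * ‖ξ - η‖ := by
      have h1 : |‖ξ‖ ^ (a/2) * (‖ξ‖ ^ (-(a/2)) - ‖η‖ ^ (-(a/2)))|
          = ‖ξ‖ ^ (a/2) * |‖ξ‖ ^ (-(a/2)) - ‖η‖ ^ (-(a/2))| := by
        rw [abs_mul, abs_of_nonneg (Real.rpow_nonneg (norm_nonneg ξ) _)]
      calc |‖ξ‖ ^ (a/2) * (‖ξ‖ ^ (-(a/2)) - ‖η‖ ^ (-(a/2)))| * |η j|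
          ≤ |‖ξ‖ ^ (a/2) * (‖ξ‖ ^ (-(a/2)) - ‖η‖ ^ (-(a/2)))| * ‖η‖ :=
            mul_le_mul_of_nonneg_left hcoord (abs_nonneg _)
        _ = ‖ξ‖ ^ (a/2) * |‖ξ‖ ^ (-(a/2)) - ‖η‖ ^ (-(a/2))| * ‖η‖ := by rw [h1]
        _ ≤ 2 * |‖ξ‖ - ‖η‖| := key_real_s7 hs0 hs1 (norm_nonneg _) (norm_nonneg _)
        _ ≤ 2 * ‖ξ - η‖ := by
            have := abs_norm_sub_norm_le ξ η
            linarith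
    calc (‖((‖ξ‖ ^ (a/2) * (‖ξ‖ ^ (-(a/2)) - ‖η‖ ^ (-(a/2))) : ℝ) : ℂ) *
              bhat (ξ - η) * (Complex.I * ((η j : ℝ) : ℂ)) * ghat η‖₊ : ℝ≥0∞)
        = ENNReal.ofReal ((|‖ξ‖ ^ (a/2) * (‖ξ‖ ^ (-(a/2)) - ‖η‖ ^ (-(a/2)))| * |η j|) *
            (‖bhat (ξ - η)‖ * ‖ghat η‖)) := by
          rw [← enorm_eq_nnnorm, ← ofReal_norm]
          congr 1
          simp only [norm_mul, Complex.norm_real, Complex.norm_I, Real.norm_eq_abs, one_mul,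
            abs_mul]
          ring
      _ ≤ ENNReal.ofReal ((2 * ‖ξ - η‖) * (‖bhat (ξ - η)‖ * ‖ghat η‖)) :=
          ENNReal.ofReal_le_ofReal
            (mul_le_mul_of_nonneg_right hkey (by positivity))
      _ = 2 * F (ξ - η) * G η := by
          simp only [hF, hG, ← enorm_eq_nnnorm, ← ofReal_norm]
          rw [ENNReal.ofReal_mul (by positivity : (0:ℝ) ≤ 2 * ‖ξ - η‖),
            ENNReal.ofReal_mul (by norm_num : (0:ℝ) ≤ 2),
            ENNReal.ofReal_mul (norm_nonneg (bhat (ξ - η))), ENNReal.ofReal_ofNat]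
          ring
  -- Cauchy–Schwarz in η for each fixed ξ
  have hCS : ∀ ξ : EuclideanSpace ℝ (Fin n), (∫⁻ η, F (ξ - η) * G η) ^ (2 : ℕ)
      ≤ I1 * ∫⁻ η, F (ξ - η) * G η ^ 2 := by
    intro ξ
    have hpq : (2 : ℝ).HolderConjugate 2 := Real.HolderConjugate.two_two
    have hFξ : Measurable fun η : EuclideanSpace ℝ (Fin n) => F (ξ - η) :=
      hFmeas.comp (measurable_const.sub measurable_id)
    have hFξh : Measurable fun η : EuclideanSpace ℝ (Fin n) => (F (ξ - η)) ^ (1/2 : ℝ) :=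
      ENNReal.continuous_rpow_const.measurable.comp hFξ
    have h := ENNReal.lintegral_mul_le_Lp_mul_Lq volume hpq hFξh.aemeasurable
      (hFξh.mul hGmeas).aemeasurable
    simp only [Pi.mul_apply] at h
    have e1 : ∀ η : EuclideanSpace ℝ (Fin n),
        (F (ξ - η)) ^ (1/2 : ℝ) * ((F (ξ - η)) ^ (1/2 : ℝ) * G η) = F (ξ - η) * G η := by
      intro η
      rw [← mul_assoc, ← ENNReal.rpow_add_of_nonneg _ _ (by norm_num) (by norm_num)]
      norm_num
    have e2 : ∀ η : EuclideanSpace ℝ (Fin n),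
        ((F (ξ - η)) ^ (1/2 : ℝ)) ^ (2 : ℝ) = F (ξ - η) := by
      intro η
      rw [← ENNReal.rpow_mul]
      norm_num
    have e3 : ∀ η : EuclideanSpace ℝ (Fin n),
        ((F (ξ - η)) ^ (1/2 : ℝ) * G η) ^ (2 : ℝ) = F (ξ - η) * G η ^ 2 := by
      intro η
      rw [ENNReal.mul_rpow_of_nonneg _ _ (by norm_num : (0:ℝ) ≤ 2), e2, hrp]
    simp only [e1, e2, e3] at h
    rw [htrans ξ] at h
    calc (∫⁻ η, F (ξ - η) * G η) ^ (2 : ℕ)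
        ≤ (I1 ^ (1/2 : ℝ) * (∫⁻ η, F (ξ - η) * G η ^ 2) ^ (1/2 : ℝ)) ^ (2 : ℕ) :=
          pow_le_pow_left₀ zero_le h 2
      _ = I1 * ∫⁻ η, F (ξ - η) * G η ^ 2 := by
          rw [mul_pow, ← hrp, ← hrp, ← ENNReal.rpow_mul, ← ENNReal.rpow_mul]
          norm_num
  -- Tonelli and translation invariance
  have hmeasF2 : Measurable fun ξ : EuclideanSpace ℝ (Fin n) =>
      ∫⁻ η, F (ξ - η) * G η ^ 2 :=
    Measurable.lintegral_prod_right
      ((hFmeas.comp (measurable_fst.sub measurable_snd)).mul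
        ((hGmeas.comp measurable_snd).pow_const 2))
  have hswap : (∫⁻ ξ, ∫⁻ η, F (ξ - η) * G η ^ 2) = I1 * I2 := by
    rw [lintegral_lintegral_swap
      (((hFmeas.comp (measurable_fst.sub measurable_snd)).mul
        ((hGmeas.comp measurable_snd).pow_const 2)).aemeasurable)]
    have e : ∀ η : EuclideanSpace ℝ (Fin n),
        (∫⁻ ξ, F (ξ - η) * G η ^ 2) = I1 * G η ^ 2 := by
      intro η
      have hm : Measurable fun ξ : EuclideanSpace ℝ (Fin n) => F (ξ - η) :=
        hFmeas.comp (measurable_id.sub measurable_const)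
      rw [lintegral_mul_const _ hm, lintegral_sub_right_eq_self F η, mul_comm]
    simp_rw [e]
    rw [lintegral_const_mul I1 (hGmeas.pow_const 2)]
  -- main chain
  calc (∫⁻ ξ, (‖Fhat ξ‖₊ : ℝ≥0∞) ^ 2) ^ (1/2 : ℝ)
      ≤ ((2 * I1) ^ (2 : ℕ) * I2) ^ (1/2 : ℝ) := by
        apply ENNReal.rpow_le_rpow _ (by norm_num)
        calc (∫⁻ ξ, (‖Fhat ξ‖₊ : ℝ≥0∞) ^ 2)
            ≤ ∫⁻ ξ, (∫⁻ η, 2 * F (ξ - η) * G η) ^ 2 :=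
              lintegral_mono fun ξ => pow_le_pow_left₀ zero_le (hpt ξ) 2
          _ = ∫⁻ ξ, 4 * (∫⁻ η, F (ξ - η) * G η) ^ 2 := by
              apply lintegral_congr
              intro ξ
              have e : (∫⁻ η, 2 * F (ξ - η) * G η) = 2 * ∫⁻ η, F (ξ - η) * G η := by
                simp_rw [mul_assoc]
                exact lintegral_const_mul' 2 _ (by norm_num)
              rw [e, mul_pow]
              norm_num
          _ ≤ ∫⁻ ξ, 4 * (I1 * ∫⁻ η, F (ξ - η) * G η ^ 2) :=
              lintegral_mono fun ξ => mul_le_mul_right (hCS ξ) 4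
          _ = 4 * I1 * (I1 * I2) := by
              simp_rw [← mul_assoc]
              rw [lintegral_const_mul _ hmeasF2, hswap]
              ring
          _ = (2 * I1) ^ (2 : ℕ) * I2 := by ring
      _ = 2 * I1 * I2 ^ (1/2 : ℝ) := by
        rw [ENNReal.mul_rpow_of_nonneg _ _ (by norm_num : (0:ℝ) ≤ 1/2), ← hrp,
          ← ENNReal.rpow_mul]
        norm_num
end
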